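/- arXiv:2105.07964 — 8 statements merged into one kernel-verified Lean document; each statement's English description precedes it below -/
import Mathlib

section
/- For θ, θ_μ ∈ [0,π] with μ = cos θ_μ, one has |μ − cos θ| ≥ (1/2)|θ − θ_μ|(sin θ + sin θ_μ); in particular |μ − cos θ| ≥ (1/2)|θ − θ_μ| sin θ_μ. -/
open Real

lemma hcos_le_sin {h : ℝ} (h0 : 0 ≤ h) (h1 : h ≤ π / 2) :
    h * Real.cos h ≤ Real.sin h := by
  rcases eq_or_lt_of_le h0 with rfl | hpos
  · simp
  rcases eq_or_lt_of_le h1 with heq | hlt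
  · rw [heq]; simp [Real.cos_pi_div_two]
  · have hc : 0 < Real.cos h := Real.cos_pos_of_mem_Ioo ⟨by linarith [Real.pi_pos], hlt⟩
    have ht : h < Real.tan h := Real.lt_tan hpos hlt
    rw [Real.tan_eq_sin_div_cos] at ht
    calc h * Real.cos h ≤ (Real.sin h / Real.cos h) * Real.cos h :=
          mul_le_mul_of_nonneg_right ht.le hc.le
      _ = Real.sin h := by field_simp

lemma key {a b : ℝ} (ha : 0 ≤ a) (hab : a ≤ b) (hb : b ≤ π) :
    (1 / 2) * (b - a) * (Real.sin a + Real.sin b) ≤ Real.cos a - Real.cos b := by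
  set m := (a + b) / 2 with hm_def
  set h := (b - a) / 2 with hh_def
  have ea : a = m - h := by rw [hm_def, hh_def]; ring
  have eb : b = m + h := by rw [hm_def, hh_def]; ring
  have hm : 0 ≤ Real.sin m := Real.sin_nonneg_of_nonneg_of_le_pi
    (by rw [hm_def]; linarith) (by rw [hm_def]; linarith)
  have hh0 : 0 ≤ h := by rw [hh_def]; linarith
  have hh1 : h ≤ π / 2 := by rw [hh_def]; linarith
  have hkey := mul_le_mul_of_nonneg_left (hcos_le_sin hh0 hh1) hm
  rw [ea, eb, Real.cos_sub, Real.cos_add, Real.sin_sub, Real.sin_add]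
  nlinarith [hkey]

/-- For `θ, θ_μ ∈ [0,π]` with `μ = cos θ_μ`:
`|μ − cos θ| ≥ (1/2)|θ − θ_μ|(sin θ + sin θ_μ)` and in particular
`|μ − cos θ| ≥ (1/2)|θ − θ_μ| sin θ_μ`. -/
theorem stmt_0 (θ θμ μ : ℝ) (hθ : θ ∈ Set.Icc 0 π) (hθμ : θμ ∈ Set.Icc 0 π)
    (hμ : μ = Real.cos θμ) :
    (1 / 2) * |θ - θμ| * (Real.sin θ + Real.sin θμ) ≤ |μ - Real.cos θ| ∧
    (1 / 2) * |θ - θμ| * Real.sin θμ ≤ |μ - Real.cos θ| := by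
  obtain ⟨h1, h2⟩ := hθ
  obtain ⟨h3, h4⟩ := hθμ
  subst hμ
  have hsθ : 0 ≤ Real.sin θ := Real.sin_nonneg_of_nonneg_of_le_pi h1 h2
  have hsθμ : 0 ≤ Real.sin θμ := Real.sin_nonneg_of_nonneg_of_le_pi h3 h4
  have main : (1 / 2) * |θ - θμ| * (Real.sin θ + Real.sin θμ) ≤ |Real.cos θμ - Real.cos θ| := by
    rcases le_total θμ θ with hle | hle
    · have hk := key h3 hle h2
      have hd : Real.cos θ ≤ Real.cos θμ := Real.cos_le_cos_of_nonneg_of_le_pi h3 h2 hle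
      rw [abs_of_nonneg (by linarith : (0:ℝ) ≤ θ - θμ),
        abs_of_nonneg (by linarith : (0:ℝ) ≤ Real.cos θμ - Real.cos θ)]
      linarith
    · have hk := key h1 hle h4
      have hd : Real.cos θμ ≤ Real.cos θ := Real.cos_le_cos_of_nonneg_of_le_pi h1 h4 hle
      rw [abs_of_nonpos (by linarith : θ - θμ ≤ 0),
        abs_of_nonpos (by linarith : Real.cos θμ - Real.cos θ ≤ 0)]
      linarith
  refine ⟨main, le_trans ?_ main⟩
  nlinarith [abs_nonneg (θ - θμ)]
end

section
/- Let μ ∈ (−1,1), θ_μ = arccos μ ∈ (0,π), and let 0 ≤ θ₁ ≤ θ_μ ≤ θ₂ ≤ π. If U : [θ₁,θ₂] → ℂ is continuously differentiable, then ∫_{θ₁}^{θ₂} |(U(θ)√(sin θ) − U(θ_μ)√(sin θ_μ))/(μ − cos θ)|² dθ ≤ (16/sin²θ_μ) ∫_{θ₁}^{θ₂} |d/dθ (U(θ)√(sin θ))|² dθ. -/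
open Real MeasureTheory Set Filter Topology
open scoped RealInnerProductSpace

/-! Since `sin` is concave on `[0, π]`, integrating its chord bound gives
`|cos θ_μ - cos θ| ≥ (sin θ_μ / 2) |θ - θ_μ|`, which reduces the claim to the one-dimensional
Hardy inequality `∫ ‖(f x - f c) / (x - c)‖² ≤ 4 ∫ ‖f'‖²` for `f = U √sin` and `c = θ_μ`.
On a compact interval `[a, b] ∋ c`, with `φ = dslope f c`, the function `‖φ x‖² (x - c)` is
`≤ 0` at `a` and `≥ 0` at `b`, and its derivative is `2⟪φ, f'⟫ - ‖φ‖² ≤ 2‖f'‖² - ‖φ‖²/2`.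
Since `√sin` is not differentiable at `0` and `π`, the open interval `(θ₁, θ₂)` is exhausted
by compact intervals containing `θ_μ`. -/

namespace Real

theorem sin_mul_pi_sub_le_sin_mul_pi_sub {x y : ℝ} (hy : 0 ≤ y) (hyx : y ≤ x) (hx : x ≤ π) :
    sin y * (π - x) ≤ sin x * (π - y) := by
  rcases hyx.eq_or_lt with rfl | hyx
  · rfl
  rcases hx.eq_or_lt with rfl | hx
  · simp
  have := strictConcaveOn_sin_Icc.concaveOn.neg.secant_mono_aux1 (x := y) (y := x) (z := π)
    ⟨hy, by linarith⟩ ⟨pi_pos.le, le_rfl⟩ hyx hx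
  simp only [Pi.neg_apply, sin_pi, neg_zero] at this
  linarith

theorem sin_div_two_mul_sub_le_cos_sub_cos {x y : ℝ} (hy : 0 ≤ y) (hyx : y ≤ x) (hx : x ≤ π) :
    sin y / 2 * (x - y) ≤ cos y - cos x := by
  rcases (hyx.trans hx).eq_or_lt with rfl | hyπ
  · obtain rfl : x = π := le_antisymm hx hyx
    simp
  -- `G ≥ 0` integrates the chord bound `sin t ≥ sin y (π - t) / (π - y)` from `y` to `x`
  set G : ℝ → ℝ := fun t => 2 * (π - y) * (cos y - cos t) - sin y * ((t - y) * (2 * π - t - y))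
  have hG : ∀ t, HasDerivAt G (2 * (π - y) * sin t - sin y * (2 * π - 2 * t)) t := by
    intro t
    refine ((((hasDerivAt_cos t).const_sub (cos y)).const_mul (2 * (π - y))).sub
      ((((hasDerivAt_id t).sub_const y).mul
        (((hasDerivAt_const t (2 * π)).sub (hasDerivAt_id t)).sub_const y)).const_mul
          (sin y))).congr_deriv ?_
    simp only [Pi.sub_apply, id]
    ring
  have hmono : MonotoneOn G (Icc y π) := by
    refine monotoneOn_of_deriv_nonneg (convex_Icc _ _)
      (fun t _ => (hG t).continuousAt.continuousWithinAt)
      (fun t _ => (hG t).differentiableAt.differentiableWithinAt) fun t ht => ?_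
    rw [interior_Icc] at ht
    rw [(hG t).deriv]
    nlinarith [sin_mul_pi_sub_le_sin_mul_pi_sub hy ht.1.le ht.2.le]
  have hGx : 0 ≤ G x := by simpa [G] using hmono ⟨le_rfl, hyπ.le⟩ ⟨hyx, hx⟩ hyx
  have hsin : 0 ≤ sin y * (x - y) :=
    mul_nonneg (sin_nonneg_of_nonneg_of_le_pi hy hyπ.le) (by linarith)
  have : (π - y) * (sin y * (x - y)) ≤ (π - y) * (2 * (cos y - cos x)) := by
    nlinarith [mul_nonneg hsin (by linarith : 0 ≤ π - x)]
  linarith [le_of_mul_le_mul_left this (by linarith)]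

theorem sin_div_two_mul_abs_sub_le_abs_cos_sub_cos {x y : ℝ} (hx : x ∈ Icc 0 π) (hy : y ∈ Icc 0 π) :
    sin y / 2 * |x - y| ≤ |cos y - cos x| := by
  rcases le_total y x with hyx | hxy
  · rw [abs_of_nonneg (sub_nonneg.2 hyx)]
    exact (sin_div_two_mul_sub_le_cos_sub_cos hy.1 hyx hx.2).trans (le_abs_self _)
  · have := sin_div_two_mul_sub_le_cos_sub_cos (x := π - x) (y := π - y)
      (by linarith [hy.2]) (by linarith) (by linarith [hx.1])
    rw [sin_pi_sub, cos_pi_sub, cos_pi_sub] at this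
    rw [abs_of_nonpos (sub_nonpos.2 hxy)]
    exact (by linarith : sin y / 2 * -(x - y) ≤ -(cos y - cos x)).trans (neg_le_abs _)

end Real

theorem continuousOn_dslope_of_differentiableAt {𝕜 F : Type*} [NontriviallyNormedField 𝕜]
    [NormedAddCommGroup F] [NormedSpace 𝕜 F] {f : 𝕜 → F} {s : Set 𝕜} {c : 𝕜}
    (hf : ∀ x ∈ s, DifferentiableAt 𝕜 f x) : ContinuousOn (dslope f c) s := fun x hx => by
  rcases eq_or_ne x c with rfl | hxc
  · exact (continuousAt_dslope_same.2 (hf x hx)).continuousWithinAt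
  · exact (continuousWithinAt_dslope_of_ne hxc).2 (hf x hx).continuousAt.continuousWithinAt

theorem setLIntegral_Ioo_le_of_forall_Icc {g : ℝ → ENNReal} {C : ENNReal} {a b c : ℝ}
    (hac : a ≤ c) (hcb : c ≤ b)
    (hg : ∀ a' b', a' ≤ c → c ≤ b' → Icc a' b' ⊆ Ioo a b ∪ {c} → ∫⁻ x in Icc a' b', g x ≤ C) :
    ∫⁻ x in Ioo a b, g x ≤ C := by
  set ε : ℕ → ℝ := fun n => 1 / ((n : ℝ) + 1)
  set I : ℕ → Set ℝ := fun n => Icc (a + (c - a) * ε n) (b - (b - c) * ε n)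
  have hε : ∀ n, 0 < ε n ∧ ε n ≤ 1 := fun n =>
    ⟨by positivity, by simpa [ε] using Nat.one_div_le_one_div (α := ℝ) (Nat.zero_le n)⟩
  have hε_lim : Tendsto ε atTop (𝓝 0) := tendsto_one_div_add_atTop_nhds_zero_nat
  have hmono : Monotone I := fun n m hnm => by
    have := Nat.one_div_le_one_div (α := ℝ) hnm
    exact Icc_subset_Icc (by nlinarith) (by nlinarith)
  have hcover : Ioo a b ⊆ ⋃ n, I n := fun x hx => by
    have ha : Tendsto (fun n => a + (c - a) * ε n) atTop (𝓝 a) := by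
      simpa using tendsto_const_nhds.add (hε_lim.const_mul (c - a))
    have hb : Tendsto (fun n => b - (b - c) * ε n) atTop (𝓝 b) := by
      simpa using tendsto_const_nhds.sub (hε_lim.const_mul (b - c))
    obtain ⟨n, hna, hnb⟩ := ((ha.eventually_lt_const hx.1).and (hb.eventually_const_lt hx.2)).exists
    exact mem_iUnion.2 ⟨n, hna.le, hnb.le⟩
  calc ∫⁻ x in Ioo a b, g x ≤ ∫⁻ x in ⋃ n, I n, g x := lintegral_mono_set hcover
    _ = ⨆ n, ∫⁻ x in I n, g x := setLIntegral_iUnion_of_directed _ hmono.directed_le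
    _ ≤ C := iSup_le fun n => by
      obtain ⟨hε0, hε1⟩ := hε n
      refine hg _ _ (by nlinarith) (by nlinarith) fun x hx => ?_
      rcases lt_trichotomy x c with hxc | rfl | hxc
      · exact Or.inl ⟨by nlinarith [hx.1], by linarith⟩
      · exact Or.inr rfl
      · exact Or.inl ⟨by linarith, by nlinarith [hx.2]⟩

section Hardy

variable {E : Type*} [NormedAddCommGroup E] [InnerProductSpace ℝ E] {f f' : ℝ → E} {a b c x : ℝ}

theorem hasDerivAt_norm_sq_dslope_mul_sub (hxc : x ≠ c) (hf : HasDerivAt f (f' x) x) :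
    HasDerivAt (fun y => ‖dslope f c y‖ ^ 2 * (y - c))
      (2 * ⟪dslope f c x, f' x⟫ - ‖dslope f c x‖ ^ 2) x := by
  have key := (hf.sub_const (f c)).norm_sq.div ((hasDerivAt_id x).sub_const c) (sub_ne_zero.2 hxc)
  have heq : (fun y => ‖f y - f c‖ ^ 2 / (id y - c)) =ᶠ[𝓝 x]
      fun y => ‖dslope f c y‖ ^ 2 * (y - c) := by
    filter_upwards [isOpen_ne.mem_nhds hxc] with y hy
    rw [dslope_of_ne _ hy, slope_def_module, norm_smul, mul_pow, norm_inv, Real.norm_eq_abs,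
      inv_pow, sq_abs, id]
    field_simp [sub_ne_zero.2 hy]
  refine (key.congr_of_eventuallyEq heq.symm).congr_deriv ?_
  rw [dslope_of_ne _ hxc, slope_def_module, real_inner_smul_left, norm_smul, mul_pow, norm_inv,
    Real.norm_eq_abs, inv_pow, sq_abs, id]
  field_simp [sub_ne_zero.2 hxc]

theorem integral_norm_sq_dslope_le (hac : a ≤ c) (hcb : c ≤ b)
    (hf : ∀ x ∈ Icc a b, HasDerivAt f (f' x) x) (hf' : ContinuousOn f' (Icc a b)) :
    ∫ x in a..b, ‖dslope f c x‖ ^ 2 ≤ 4 * ∫ x in a..b, ‖f' x‖ ^ 2 := by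
  have hab := hac.trans hcb
  have hφ : ContinuousOn (dslope f c) (Icc a b) :=
    continuousOn_dslope_of_differentiableAt fun x hx => (hf x hx).differentiableAt
  have hint {g : ℝ → ℝ} (hg : ContinuousOn g (Icc a b)) : IntervalIntegrable g volume a b :=
    hg.intervalIntegrable_of_Icc hab
  have hφ2 : IntervalIntegrable (fun y => ‖dslope f c y‖ ^ 2) volume a b := hint (hφ.norm.pow 2)
  have hf'2 : IntervalIntegrable (fun y => ‖f' y‖ ^ 2) volume a b := hint (hf'.norm.pow 2)
  have hH : IntervalIntegrable
      (fun y => 2 * ⟪dslope f c y, f' y⟫ - ‖dslope f c y‖ ^ 2) volume a b :=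
    hint (((hφ.inner hf').const_smul (2 : ℝ)).sub (hφ.norm.pow 2))
  have hFTC := integral_eq_of_hasDerivAt_off_countable_of_le _ _ hab (countable_singleton c)
    ((hφ.norm.pow 2).mul (continuousOn_id.sub continuousOn_const))
    (fun x hx => hasDerivAt_norm_sq_dslope_mul_sub hx.2 (hf x (Ioo_subset_Icc_self hx.1))) hH
  have hends : 0 ≤ ‖dslope f c b‖ ^ 2 * (b - c) - ‖dslope f c a‖ ^ 2 * (a - c) := by
    nlinarith [sq_nonneg ‖dslope f c b‖, sq_nonneg ‖dslope f c a‖]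
  have hAMGM : ∀ y ∈ Icc a b, 2 * ⟪dslope f c y, f' y⟫ - ‖dslope f c y‖ ^ 2 ≤
      2 * ‖f' y‖ ^ 2 - ‖dslope f c y‖ ^ 2 / 2 := fun y _ => by
    nlinarith [real_inner_le_norm (dslope f c y) (f' y), sq_nonneg (‖dslope f c y‖ - 2 * ‖f' y‖)]
  have := intervalIntegral.integral_mono_on hab hH ((hf'2.const_mul 2).sub (hφ2.div_const 2)) hAMGM
  rw [hFTC, intervalIntegral.integral_sub (hf'2.const_mul 2) (hφ2.div_const 2),
    intervalIntegral.integral_const_mul, intervalIntegral.integral_div] at this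
  simp only [Pi.mul_apply, Pi.sub_apply, Pi.pow_apply, id] at this
  linarith

theorem setLIntegral_Icc_norm_sq_slope_le (hac : a ≤ c) (hcb : c ≤ b)
    (hf : ∀ x ∈ Icc a b, HasDerivAt f (f' x) x) (hf' : ContinuousOn f' (Icc a b)) :
    ∫⁻ x in Icc a b, ENNReal.ofReal (‖slope f c x‖ ^ 2) ≤
      4 * ∫⁻ x in Icc a b, ENNReal.ofReal (‖f' x‖ ^ 2) := by
  have hab := hac.trans hcb
  have hφ : ContinuousOn (dslope f c) (Icc a b) :=
    continuousOn_dslope_of_differentiableAt fun x hx => (hf x hx).differentiableAt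
  have hofReal {g : ℝ → ℝ} (hg : ContinuousOn g (Icc a b)) (hg0 : ∀ x, 0 ≤ g x) :
      ∫⁻ x in Icc a b, ENNReal.ofReal (g x) = ENNReal.ofReal (∫ x in a..b, g x) := by
    rw [← ofReal_integral_eq_lintegral_ofReal (hg.integrableOn_Icc) (.of_forall hg0),
      intervalIntegral.integral_of_le hab, integral_Icc_eq_integral_Ioc]
  have hslope : ∀ᵐ x ∂volume.restrict (Icc a b),
      ENNReal.ofReal (‖slope f c x‖ ^ 2) = ENNReal.ofReal (‖dslope f c x‖ ^ 2) := by
    filter_upwards [ae_restrict_of_ae (volume.ae_ne c)] with x hx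
    rw [dslope_of_ne _ hx]
  rw [lintegral_congr_ae hslope,
    hofReal (g := fun x => ‖dslope f c x‖ ^ 2) (hφ.norm.pow 2) fun _ => by positivity,
    hofReal (g := fun x => ‖f' x‖ ^ 2) (hf'.norm.pow 2) fun _ => by positivity,
    ← ENNReal.ofReal_ofNat 4, ← ENNReal.ofReal_mul (by norm_num)]
  exact ENNReal.ofReal_le_ofReal (integral_norm_sq_dslope_le hac hcb hf hf')

theorem lintegral_norm_sq_slope_le (hac : a ≤ c) (hcb : c ≤ b)
    (hf : ∀ x ∈ Ioo a b ∪ {c}, HasDerivAt f (f' x) x) (hf' : ContinuousOn f' (Ioo a b ∪ {c})) :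
    ∫⁻ x in Ioo a b, ENNReal.ofReal (‖slope f c x‖ ^ 2) ≤
      4 * ∫⁻ x in Ioo a b, ENNReal.ofReal (‖f' x‖ ^ 2) := by
  refine setLIntegral_Ioo_le_of_forall_Icc hac hcb fun a' b' ha' hb' hsub => ?_
  have hsub' : Icc a' b' ⊆ Icc a b :=
    hsub.trans (union_subset Ioo_subset_Icc_self (singleton_subset_iff.2 ⟨hac, hcb⟩))
  calc _ ≤ 4 * ∫⁻ x in Icc a' b', ENNReal.ofReal (‖f' x‖ ^ 2) :=
        setLIntegral_Icc_norm_sq_slope_le ha' hb' (fun x hx => hf x (hsub hx)) (hf'.mono hsub)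
    _ ≤ 4 * ∫⁻ x in Icc a b, ENNReal.ofReal (‖f' x‖ ^ 2) := by gcongr
    _ = _ := by rw [setLIntegral_congr Ioo_ae_eq_Icc]

end Hardy

theorem norm_sq_sub_div_cos_sub_cos_le (F : ℝ → ℂ) {θ θ₀ : ℝ} (hθ : θ ∈ Icc 0 π)
    (hθ₀ : θ₀ ∈ Ioo 0 π) :
    ‖(F θ - F θ₀) / ((cos θ₀ : ℂ) - (cos θ : ℂ))‖ ^ 2 ≤ 4 / sin θ₀ ^ 2 * ‖slope F θ₀ θ‖ ^ 2 := by
  rcases eq_or_ne θ θ₀ with rfl | hne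
  · simp
  have hs := sin_pos_of_mem_Ioo hθ₀
  have hpos : 0 < sin θ₀ / 2 * |θ - θ₀| := by
    have := abs_pos.2 (sub_ne_zero.2 hne)
    positivity
  have hnorm : ‖(F θ - F θ₀) / ((cos θ₀ : ℂ) - (cos θ : ℂ))‖ ≤ 2 / sin θ₀ * ‖slope F θ₀ θ‖ := by
    rw [slope_def_module, norm_smul, norm_div, ← Complex.ofReal_sub, Complex.norm_real, norm_inv,
      Real.norm_eq_abs, Real.norm_eq_abs]
    calc ‖F θ - F θ₀‖ / |cos θ₀ - cos θ| ≤ ‖F θ - F θ₀‖ / (sin θ₀ / 2 * |θ - θ₀|) :=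
          div_le_div_of_nonneg_left (norm_nonneg _) hpos
            (sin_div_two_mul_abs_sub_le_abs_cos_sub_cos hθ (Ioo_subset_Icc_self hθ₀))
      _ = 2 / sin θ₀ * (|θ - θ₀|⁻¹ * ‖F θ - F θ₀‖) := by
          field_simp
  calc _ ≤ (2 / sin θ₀ * ‖slope F θ₀ θ‖) ^ 2 := by gcongr
    _ = _ := by ring

theorem hasDerivAt_mul_sqrt_sin {U : ℝ → ℂ} {u : ℂ} {t : ℝ} (ht : t ∈ Ioo 0 π)
    (hU : HasDerivAt U u t) :
    HasDerivAt (fun t => U t * (√(sin t) : ℂ))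
      (u * √(sin t) + U t * ((cos t / (2 * √(sin t)) : ℝ) : ℂ)) t := by
  have := ((hasDerivAt_sqrt (sin_pos_of_mem_Ioo ht).ne').comp t (hasDerivAt_sin t)).ofReal_comp
  exact hU.mul (this.congr_deriv (by push_cast; ring))

theorem lintegral_norm_sq_slope_mul_sqrt_sin_le {U U' : ℝ → ℂ} {θ₀ θ₁ θ₂ : ℝ}
    (hθ₀ : θ₀ ∈ Ioo 0 π) (hθ₁ : θ₁ ∈ Icc 0 θ₀) (hθ₂ : θ₂ ∈ Icc θ₀ π)
    (hU : ∀ θ ∈ Icc θ₁ θ₂, HasDerivAt U (U' θ) θ) (hU' : ContinuousOn U' (Icc θ₁ θ₂)) :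
    ∫⁻ θ in Ioo θ₁ θ₂, ENNReal.ofReal (‖slope (fun t => U t * (√(sin t) : ℂ)) θ₀ θ‖ ^ 2) ≤
      4 * ∫⁻ θ in Ioo θ₁ θ₂,
        ENNReal.ofReal (‖deriv (fun t => U t * (√(sin t) : ℂ)) θ‖ ^ 2) := by
  set D : ℝ → ℂ := fun t => U' t * √(sin t) + U t * ((cos t / (2 * √(sin t)) : ℝ) : ℂ)
  have hS : Ioo θ₁ θ₂ ∪ {θ₀} ⊆ Icc θ₁ θ₂ ∩ Ioo 0 π := by
    rintro θ (hθ | rfl)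
    · exact ⟨Ioo_subset_Icc_self hθ, hθ₁.1.trans_lt hθ.1, hθ.2.trans_le hθ₂.2⟩
    · exact ⟨⟨hθ₁.2, hθ₂.1⟩, hθ₀⟩
  have hF : ∀ θ ∈ Ioo θ₁ θ₂ ∪ {θ₀}, HasDerivAt (fun t => U t * (√(sin t) : ℂ)) (D θ) θ :=
    fun θ hθ => hasDerivAt_mul_sqrt_sin (hS hθ).2 (hU θ (hS hθ).1)
  have hUc : ContinuousOn U (Icc θ₁ θ₂) := fun θ hθ => (hU θ hθ).continuousAt.continuousWithinAt
  have hD : ContinuousOn D (Icc θ₁ θ₂ ∩ Ioo 0 π) := by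
    refine ((hU'.mono inter_subset_left).mul (by fun_prop)).add
      ((hUc.mono inter_subset_left).mul (Complex.continuous_ofReal.comp_continuousOn ?_))
    refine (continuous_cos.continuousOn).div (by fun_prop) fun θ hθ => ?_
    have := sin_pos_of_mem_Ioo hθ.2
    positivity
  calc _ ≤ 4 * ∫⁻ θ in Ioo θ₁ θ₂, ENNReal.ofReal (‖D θ‖ ^ 2) :=
        lintegral_norm_sq_slope_le hθ₁.2 hθ₂.1 hF (hD.mono hS)
    _ = _ := by
      congr 1
      refine setLIntegral_congr_fun measurableSet_Ioo fun θ hθ => ?_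
      rw [(hF θ (Or.inl hθ)).deriv]

/-- Hardy type inequality (Lemma `L:Hardy` of the paper) for
`u = U(θ) e^{imφ} ∈ H¹(S²(θ₁,θ₂))` with `m ≠ 0`:
`∫_{θ₁}^{θ₂} |(U(θ)√(sin θ) − U(θ_μ)√(sin θ_μ))/(μ − cos θ)|² dθ
   ≤ (16/sin²θ_μ) ∫_{θ₁}^{θ₂} |d/dθ (U(θ)√(sin θ))|² dθ`.
(The right-hand side `(16/(π sin²θ_μ)) ‖∇u‖²_{L²(S²(θ₁,θ₂))}` of the paper equals
`(16/sin²θ_μ) · 2 ∫ (|U'|² + m²|U|²/sin²θ) sinθ dθ / (2) ...`; here we state the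
Hardy inequality in the equivalent one-dimensional form used in its proof, with the
derivative of `θ ↦ U(θ)√(sin θ)`.  Lebesgue (`ENNReal`) integrals are used so that
both sides are always defined.) -/
theorem stmt_1 (μ : ℝ) (hμ : μ ∈ Set.Ioo (-1 : ℝ) 1)
    (θμ θ₁ θ₂ : ℝ) (hθμ : θμ = Real.arccos μ)
    (hθ₁ : θ₁ ∈ Set.Icc 0 θμ) (hθ₂ : θ₂ ∈ Set.Icc θμ π)
    (U U' : ℝ → ℂ)
    (hU : ∀ θ ∈ Set.Icc θ₁ θ₂, HasDerivAt U (U' θ) θ)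
    (hU' : ContinuousOn U' (Set.Icc θ₁ θ₂)) :
    (∫⁻ θ in Set.Ioo θ₁ θ₂,
        ENNReal.ofReal
          (‖(U θ * (Real.sqrt (Real.sin θ) : ℂ)
              - U θμ * (Real.sqrt (Real.sin θμ) : ℂ)) / ((μ : ℂ) - (Real.cos θ : ℂ))‖ ^ 2))
      ≤ ENNReal.ofReal (16 / (Real.sin θμ) ^ 2) *
          ∫⁻ θ in Set.Ioo θ₁ θ₂,
            ENNReal.ofReal
              (‖deriv (fun t => U t * (Real.sqrt (Real.sin t) : ℂ)) θ‖ ^ 2) := by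
  have hθμ_mem : θμ ∈ Ioo 0 π := hθμ ▸ ⟨arccos_pos.2 hμ.2, arccos_lt_pi.2 hμ.1⟩
  have hμ_cos : μ = cos θμ := by rw [hθμ, cos_arccos hμ.1.le hμ.2.le]
  set F : ℝ → ℂ := fun t => U t * (√(sin t) : ℂ)
  calc _ ≤ ∫⁻ θ in Ioo θ₁ θ₂,
        ENNReal.ofReal (4 / sin θμ ^ 2) * ENNReal.ofReal (‖slope F θμ θ‖ ^ 2) := by
        refine setLIntegral_mono' measurableSet_Ioo fun θ hθ => ?_
        rw [← ENNReal.ofReal_mul (by positivity), hμ_cos]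
        exact ENNReal.ofReal_le_ofReal (norm_sq_sub_div_cos_sub_cos_le F
          ⟨hθ₁.1.trans hθ.1.le, hθ.2.le.trans hθ₂.2⟩ hθμ_mem)
    _ = ENNReal.ofReal (4 / sin θμ ^ 2) *
          ∫⁻ θ in Ioo θ₁ θ₂, ENNReal.ofReal (‖slope F θμ θ‖ ^ 2) :=
        lintegral_const_mul' _ _ ENNReal.ofReal_ne_top
    _ ≤ ENNReal.ofReal (4 / sin θμ ^ 2) *
          (4 * ∫⁻ θ in Ioo θ₁ θ₂, ENNReal.ofReal (‖deriv F θ‖ ^ 2)) := by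
        gcongr
        exact lintegral_norm_sq_slope_mul_sqrt_sin_le hθμ_mem hθ₁ hθ₂ hU hU'
    _ = _ := by
        rw [← mul_assoc, ← ENNReal.ofReal_ofNat 4, ← ENNReal.ofReal_mul (by positivity)]
        congr 2
        ring
end

section
/- For a C¹ function U : [0,π] → ℂ with U(0) = 0 and any integer m with |m| ≥ 1, one has ‖U‖_{L^∞(0,π)}² ≤ (1/(π|m|)) · 2π ∫_0^π ( |U'(θ)|² + (m²/sin²θ)|U(θ)|² ) sin θ dθ. -/
/-!
Since `U 0 = 0`, `|U θ|²` is the integral over `(0, θ)` of its derivative `2 Re ⟨U, U'⟩`, and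
by AM–GM `2 |U| |U'| ≤ (|U'|² + (m² / sin² t) |U|²) sin t / |m|` pointwise, so
`|U θ|² ≤ |m|⁻¹ ∫₀^π (|U'|² + (m² / sin² t) |U|²) sin t dt`, which is half the claimed bound.
-/

open Real MeasureTheory Set

theorem enorm_sub_le_lintegral_enorm_deriv {E : Type*} [NormedAddCommGroup E]
    [NormedSpace ℝ E] [CompleteSpace E] {f : ℝ → E} {a b : ℝ} (hab : a ≤ b)
    (hfc : ContinuousOn f (Icc a b)) (hfd : DifferentiableOn ℝ f (Ioo a b)) :
    ‖f b - f a‖ₑ ≤ ∫⁻ t in Ioo a b, ‖deriv f t‖ₑ := by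
  by_cases hfin : ∫⁻ t in Ioo a b, ‖deriv f t‖ₑ = ⊤
  · simp [hfin]
  have hint : IntegrableOn (deriv f) (Ioo a b) :=
    ⟨aestronglyMeasurable_deriv f _, lt_top_iff_ne_top.2 hfin⟩
  have hint' : IntervalIntegrable (‖deriv f ·‖) volume a b := by
    rw [intervalIntegrable_iff_integrableOn_Ioo_of_le hab]
    exact hint.norm
  calc ‖f b - f a‖ₑ = ENNReal.ofReal ‖f b - f a‖ := (ofReal_norm _).symm
    _ ≤ ENNReal.ofReal (∫ t in a..b, ‖deriv f t‖) := ENNReal.ofReal_le_ofReal <|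
        norm_sub_le_integral_of_norm_deriv_le_of_le hab hfc hfd (.of_forall fun _ _ ↦ le_rfl) hint'
    _ = ∫⁻ t in Ioo a b, ‖deriv f t‖ₑ := by
      rw [intervalIntegral.integral_of_le hab, integral_Ioc_eq_integral_Ioo,
        ofReal_integral_norm_eq_lintegral_enorm hint]

theorem two_mul_mul_le_inv_mul_sq_add_div_sq_mul_sq_mul {x y s c : ℝ} (hs : 0 < s) (hc : 0 < c) :
    2 * x * y ≤ c⁻¹ * ((x ^ 2 + c ^ 2 / s ^ 2 * y ^ 2) * s) := by
  have key : c⁻¹ * ((x ^ 2 + c ^ 2 / s ^ 2 * y ^ 2) * s) - 2 * x * y =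
      (s * x - c * y) ^ 2 / (s * c) := by
    field_simp
    ring
  have : 0 ≤ (s * x - c * y) ^ 2 / (s * c) := by positivity
  linarith

theorem stmt_2_general (U U' : ℝ → ℂ)
    (hU : ∀ θ ∈ Set.Icc (0 : ℝ) π, HasDerivAt U (U' θ) θ)
    (hU0 : U 0 = 0) (m : ℤ) (hm : 1 ≤ |m|) :
    ∀ θ ∈ Set.Icc (0 : ℝ) π,
      ENNReal.ofReal (‖U θ‖ ^ 2) ≤
        ENNReal.ofReal (1 / (π * |(m : ℝ)|)) *
          (ENNReal.ofReal (2 * π) *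
            ∫⁻ θ in Set.Ioo (0 : ℝ) π,
              ENNReal.ofReal
                ((‖U' θ‖ ^ 2 + ((m : ℝ) ^ 2 / (Real.sin θ) ^ 2) * ‖U θ‖ ^ 2) *
                  Real.sin θ)) := by
  rintro θ ⟨hθ0, hθπ⟩
  have hM : 0 < |(m : ℝ)| := by
    rw [← Int.cast_abs]
    exact_mod_cast hm
  have hsq : ∀ t ∈ Icc 0 θ, HasDerivAt (‖U ·‖ ^ 2) (2 * inner ℝ (U t) (U' t)) t :=
    fun t ht ↦ (hU t ⟨ht.1, ht.2.trans hθπ⟩).norm_sq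
  have hspeed : ∀ t ∈ Ioo 0 θ, ‖deriv (‖U ·‖ ^ 2) t‖ₑ ≤ ENNReal.ofReal |(m : ℝ)|⁻¹ *
      ENNReal.ofReal ((‖U' t‖ ^ 2 + ((m : ℝ) ^ 2 / (Real.sin t) ^ 2) * ‖U t‖ ^ 2) * Real.sin t) := by
    intro t ht
    have hsin : 0 < Real.sin t := sin_pos_of_pos_of_lt_pi ht.1 (ht.2.trans_le hθπ)
    rw [(hsq t (Ioo_subset_Icc_self ht)).deriv, enorm_eq_ofReal_abs,
      ← ENNReal.ofReal_mul (inv_nonneg.2 hM.le), ← sq_abs (m : ℝ)]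
    refine ENNReal.ofReal_le_ofReal ?_
    calc |2 * inner ℝ (U t) (U' t)| ≤ 2 * ‖U' t‖ * ‖U t‖ := by
          rw [abs_mul, abs_two, mul_assoc, mul_comm ‖U' t‖]
          gcongr
          exact abs_real_inner_le_norm _ _
      _ ≤ _ := two_mul_mul_le_inv_mul_sq_add_div_sq_mul_sq_mul hsin hM
  have hconst : ENNReal.ofReal |(m : ℝ)|⁻¹ ≤
      ENNReal.ofReal (1 / (π * |(m : ℝ)|)) * ENNReal.ofReal (2 * π) := by
    rw [← ENNReal.ofReal_mul (by positivity)]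
    refine ENNReal.ofReal_le_ofReal ?_
    rw [show 1 / (π * |(m : ℝ)|) * (2 * π) = 2 * |(m : ℝ)|⁻¹ by field_simp]
    linarith [inv_pos.2 hM]
  calc ENNReal.ofReal (‖U θ‖ ^ 2) = ‖‖U θ‖ ^ 2 - ‖U 0‖ ^ 2‖ₑ := by
        simp [hU0, enorm_eq_ofReal_abs]
    _ ≤ ∫⁻ t in Ioo 0 θ, ‖deriv (‖U ·‖ ^ 2) t‖ₑ :=
        enorm_sub_le_lintegral_enorm_deriv hθ0
          (fun t ht ↦ (hsq t ht).continuousAt.continuousWithinAt)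
          (fun t ht ↦ (hsq t (Ioo_subset_Icc_self ht)).differentiableAt.differentiableWithinAt)
    _ ≤ _ := setLIntegral_mono' measurableSet_Ioo hspeed
    _ ≤ _ := lintegral_mono_set (Ioo_subset_Ioo_right hθπ)
    _ = _ := lintegral_const_mul' _ _ ENNReal.ofReal_ne_top
    _ ≤ _ := mul_le_mul_left hconst _
    _ = _ := mul_assoc _ _ _

/-- Lemma `L:Linf` of the paper: for a `C¹` function `U : [0,π] → ℂ` with `U(0) = 0`
and an integer `m` with `|m| ≥ 1`,
`‖U‖²_{L^∞(0,π)} ≤ (1/(π|m|)) · 2π ∫₀^π (|U'(θ)|² + (m²/sin²θ)|U(θ)|²) sin θ dθ`.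
Here the `L^∞` bound is stated pointwise (equivalent for continuous `U`), and the
right-hand side, which equals `(1/(π|m|)) ‖∇u‖²_{L²(S²)}` for `u = U(θ)e^{imφ}`, is
written as a Lebesgue (`ENNReal`) integral so that it is defined even when infinite. -/
theorem stmt_2 (U U' : ℝ → ℂ)
    (hU : ∀ θ ∈ Set.Icc (0 : ℝ) π, HasDerivAt U (U' θ) θ)
    (hU' : ContinuousOn U' (Set.Icc (0 : ℝ) π))
    (hU0 : U 0 = 0) (m : ℤ) (hm : 1 ≤ |m|) :
    ∀ θ ∈ Set.Icc (0 : ℝ) π,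
      ENNReal.ofReal (‖U θ‖ ^ 2) ≤
        ENNReal.ofReal (1 / (π * |(m : ℝ)|)) *
          (ENNReal.ofReal (2 * π) *
            ∫⁻ θ in Set.Ioo (0 : ℝ) π,
              ENNReal.ofReal
                ((‖U' θ‖ ^ 2 + ((m : ℝ) ^ 2 / (Real.sin θ) ^ 2) * ‖U θ‖ ^ 2) *
                  Real.sin θ)) :=
  stmt_2_general U U' hU hU0 m hm
end

section
/- Let X be a complex Hilbert space, A self-adjoint on X with (−Au,u) ≥ C_A‖u‖² for u ∈ D(A), Λ closed and A-compact, N = ker Λ closed, Q the orthogonal projection onto N^⊥ with QA ⊂ AQ, and B₂ a bounded self-adjoint operator on X with ker B₂ = N, (u, B₂u) ≥ C‖u‖² for u ∈ N^⊥, Re(−Au, B₂u) ≥ C‖(−A)^{1/2}u‖² for u ∈ D(A) ∩ N^⊥, and Im(Λu, B₂u) = 0 for u ∈ D(Λ). Then for every α ∈ ℝ, the spectrum of L_α = A − iαΛ is contained in the open left half-plane {ζ ∈ ℂ : Re ζ < 0}; in particular {Re ζ ≥ 0} ⊂ ρ(L_α). -/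
open Filter

variable {X : Type*} [NormedAddCommGroup X] [InnerProductSpace ℂ X] [CompleteSpace X]

/-- `Λ` is `A`-compact: `D(A) ⊆ D(Λ)` and for every sequence `(u_k) ⊆ D(A)` with
`‖u_k‖ + ‖A u_k‖` bounded, `(Λ u_k)` has a convergent subsequence. -/
def IsRelCompact (A Λ : X →ₗ.[ℂ] X) (h : A.domain ≤ Λ.domain) : Prop :=
  ∀ u : ℕ → A.domain, (∃ M : ℝ, ∀ k, ‖(u k : X)‖ + ‖A (u k)‖ ≤ M) →
    ∃ φ : ℕ → ℕ, StrictMono φ ∧ ∃ l : X,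
      Tendsto (fun k => Λ ⟨(u (φ k) : X), h (u (φ k)).2⟩) atTop (nhds l)

/-- The operator `L_α = A − iαΛ` with domain `D(A)`. -/
noncomputable def pmapL (A Λ : X →ₗ.[ℂ] X) (h : A.domain ≤ Λ.domain) (α : ℝ) :
    X →ₗ.[ℂ] X :=
  ⟨A.domain, A.toFun - (Complex.I * (α : ℂ)) • (Λ.toFun.comp (Submodule.inclusion h))⟩

/-- `ζ` belongs to the resolvent set of the operator `T`: `ζ − T : D(T) → X` is
bijective with bounded inverse. -/
def InResolvent (T : X →ₗ.[ℂ] X) (ζ : ℂ) : Prop :=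
  ∃ R : X →L[ℂ] X, (∀ u : T.domain, R (ζ • (u : X) - T u) = u) ∧
    ∀ f : X, ∃ h : R f ∈ T.domain, ζ • R f - T ⟨R f, h⟩ = f

/-!
For `Re ζ ≥ 0` the coercive self-adjoint operator `ζ - A` has a bounded inverse `R`, and
`ζ - L_α = (1 + iαΛR)(ζ - A)` on `D(A)`. As `Λ` is `A`-compact, `iαΛR` is a compact operator, so by
the Fredholm alternative `1 + iαΛR` is invertible as soon as `ζ - L_α` is injective.

Injectivity is an energy estimate in the weighted form `(u, B₂v)`: pairing `(ζ - L_α)u = 0` with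
`B₂u`, the `Λ`-term is purely imaginary and `B₂` only sees `v = Qu ∈ N^⊥`, so
`Re ζ · (v, B₂v) = Re (Av, B₂v) ≤ -C·C_A‖v‖²` forces `Qu = 0`. Then `Λu = 0`, and `(ζ - A)u = 0`
gives `u = 0`.
-/

open Topology

theorem totallyBounded_of_forall_exists_tendsto_subseq {α : Type*} [UniformSpace α] {s : Set α}
    (h : ∀ u : ℕ → α, (∀ n, u n ∈ s) →
      ∃ φ : ℕ → ℕ, StrictMono φ ∧ ∃ l, Tendsto (u ∘ φ) atTop (𝓝 l)) :
    TotallyBounded s := by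
  intro V hV
  by_contra! hcover
  -- otherwise `s` contains a `V`-separated sequence, which has no Cauchy subsequence
  obtain ⟨u, hus, hsep⟩ : ∃ u : ℕ → α, (∀ n, u n ∈ s) ∧
      ∀ n m, m < n → u m ∉ UniformSpace.ball (u n) V := by
    simp only [Set.not_subset, Set.mem_iUnion₂, not_exists, exists_prop] at hcover
    simpa only [forall_and, Set.forall_mem_image, not_and] using!
      Set.seq_of_forall_finite_exists hcover
  obtain ⟨φ, hφ, l, hl⟩ := h u hus
  obtain ⟨N, hN⟩ := hl.cauchySeq.mem_entourage hV
  exact hsep (φ (N + 1)) (φ N) (hφ N.lt_succ_self) (hN (N + 1) N N.le_succ le_rfl)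

theorem isCompactOperator_of_forall_exists_tendsto_subseq {𝕜 E F : Type*}
    [NontriviallyNormedField 𝕜] [NormedAddCommGroup E] [NormedSpace 𝕜 E]
    [NormedAddCommGroup F] [NormedSpace 𝕜 F] [CompleteSpace F] (f : E →ₗ[𝕜] F)
    (h : ∀ u : ℕ → E, (∃ M, ∀ n, ‖u n‖ ≤ M) →
      ∃ φ : ℕ → ℕ, StrictMono φ ∧ ∃ l, Tendsto (fun n => f (u (φ n))) atTop (𝓝 l)) :
    IsCompactOperator f := by
  rw [isCompactOperator_iff_isCompact_closure_image_ball f one_pos]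
  refine TotallyBounded.isCompact_of_isComplete ?_ isClosed_closure.isComplete
  refine TotallyBounded.closure (totallyBounded_of_forall_exists_tendsto_subseq fun y hy => ?_)
  choose x hx hxy using hy
  obtain rfl : y = fun n => f (x n) := funext fun n => (hxy n).symm
  exact h x ⟨1, fun n => (mem_ball_zero_iff.mp (hx n)).le⟩

theorem IsCompactOperator.isUnit_one_add {𝕜 E : Type*} [NontriviallyNormedField 𝕜]
    [NormedAddCommGroup E] [NormedSpace 𝕜 E] [CompleteSpace E] {K : E →L[𝕜] E}
    (hK : IsCompactOperator K) (hinj : ∀ x, x + K x = 0 → x = 0) : IsUnit (1 + K) := by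
  have hnot : ¬ Module.End.HasEigenvalue (K : Module.End 𝕜 E) (-1) := by
    intro hev
    obtain ⟨x, hx⟩ := hev.exists_hasEigenvector
    refine hx.2 (hinj x ?_)
    rw [← ContinuousLinearMap.coe_coe, hx.apply_eq_smul]
    simp
  have hres :=
    (hK.hasEigenvalue_or_mem_resolventSet (neg_ne_zero.mpr one_ne_zero)).resolve_left hnot
  rw [spectrum.mem_resolventSet_iff, ← IsUnit.neg_iff] at hres
  simpa [add_comm] using hres

namespace LinearPMap

def smulSub {R E : Type*} [CommRing R] [AddCommGroup E] [Module R E] (T : E →ₗ.[R] E) (ζ : R) :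
    T.domain →ₗ[R] E :=
  ζ • T.domain.subtype - T.toFun

@[simp]
theorem smulSub_apply {R E : Type*} [CommRing R] [AddCommGroup E] [Module R E]
    (T : E →ₗ.[R] E) (ζ : R) (u : T.domain) : T.smulSub ζ u = ζ • (u : E) - T u :=
  rfl

theorem IsClosed.isClosed_range_smulSub {𝕜 E : Type*} [NontriviallyNormedField 𝕜]
    [NormedAddCommGroup E] [NormedSpace 𝕜 E] [CompleteSpace E] {T : E →ₗ.[𝕜] E}
    (hT : T.IsClosed) (ζ : 𝕜) {c : ℝ} (hc : 0 < c)
    (hbdd : ∀ u : T.domain, c * ‖(u : E)‖ ≤ ‖T.smulSub ζ u‖) :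
    _root_.IsClosed (LinearMap.range (T.smulSub ζ) : Set E) := by
  refine IsSeqClosed.isClosed fun f p hf hfp => ?_
  choose u hu using fun n => LinearMap.mem_range.mp (hf n)
  have hcauchy : CauchySeq fun n => (u n : E) := by
    refine Metric.cauchySeq_iff.mpr fun ε hε => ?_
    obtain ⟨n₀, hn₀⟩ := Metric.cauchySeq_iff.mp hfp.cauchySeq (c * ε) (mul_pos hc hε)
    refine ⟨n₀, fun m hm n hn => ?_⟩
    have hmn := hbdd (u m - u n)
    rw [(T.smulSub ζ).map_sub, hu, hu, ← dist_eq_norm, Submodule.coe_sub, ← dist_eq_norm] at hmn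
    exact lt_of_mul_lt_mul_left (hmn.trans_lt (hn₀ m hm n hn)) hc.le
  obtain ⟨x, hx⟩ := cauchySeq_tendsto_of_complete hcauchy
  have hTu : Tendsto (fun n => T (u n)) atTop (𝓝 (ζ • x - p)) := by
    have h := (hx.const_smul ζ).sub hfp
    refine h.congr fun n => ?_
    rw [← hu n, smulSub_apply, sub_sub_cancel]
  have hgraph : (x, ζ • x - p) ∈ T.graph :=
    hT.mem_of_tendsto (hx.prodMk_nhds hTu) (Eventually.of_forall fun n => T.mem_graph (u n))
  obtain ⟨y, rfl, hy⟩ := T.mem_graph_iff.mp hgraph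
  exact ⟨y, by rw [smulSub_apply, hy, sub_sub_cancel]⟩

end LinearPMap

section Resolvent

variable {E : Type*} [NormedAddCommGroup E] [InnerProductSpace ℂ E]

theorem mul_norm_le_norm_of_mul_sq_le_re_inner {c : ℝ} {x y : E}
    (h : c * ‖x‖ ^ 2 ≤ (inner ℂ y x).re) : c * ‖x‖ ≤ ‖y‖ := by
  rcases (norm_nonneg x).eq_or_lt with hx | hx
  · rw [← hx, mul_zero]; exact norm_nonneg y
  · have hyx := (Complex.re_le_norm _).trans (norm_inner_le_norm (𝕜 := ℂ) y x)
    nlinarith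

theorem LinearPMap.mul_norm_le_norm_smulSub {A : E →ₗ.[ℂ] E} {c : ℝ}
    (hcoer : ∀ u : A.domain, c * ‖(u : E)‖ ^ 2 ≤ (inner ℂ (-(A u)) (u : E)).re)
    {ζ : ℂ} (hζ : 0 ≤ ζ.re) (u : A.domain) : c * ‖(u : E)‖ ≤ ‖A.smulSub ζ u‖ := by
  refine mul_norm_le_norm_of_mul_sq_le_re_inner ?_
  have hζu : (inner ℂ (ζ • (u : E)) u).re = ζ.re * ‖(u : E)‖ ^ 2 := by
    simp [inner_self_eq_norm_sq_to_K, ← Complex.ofReal_pow, mul_comm]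
  rw [smulSub_apply, sub_eq_add_neg, inner_add_left, Complex.add_re, hζu]
  nlinarith [hcoer u, mul_nonneg hζ (sq_nonneg ‖(u : E)‖)]

theorem inResolvent_iff_exists_inverse {T : E →ₗ.[ℂ] E} {ζ : ℂ} :
    InResolvent T ζ ↔ ∃ S : E →L[ℂ] T.domain,
      Function.LeftInverse S (T.smulSub ζ) ∧ Function.RightInverse S (T.smulSub ζ) := by
  constructor
  · rintro ⟨R, hleft, hright⟩
    choose hmem hR using hright
    let S : E →L[ℂ] T.domain :=
      ⟨LinearMap.codRestrict T.domain R hmem, R.continuous.subtype_mk hmem⟩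
    exact ⟨S, fun u => Subtype.ext (hleft u), hR⟩
  · rintro ⟨S, hleft, hright⟩
    exact ⟨T.domain.subtypeL.comp S, fun u => congrArg Subtype.val (hleft u),
      fun f => ⟨(S f).2, hright f⟩⟩

theorem inResolvent_of_surjective {T : E →ₗ.[ℂ] E} {ζ : ℂ} {c : ℝ} (hc : 0 < c)
    (hbdd : ∀ u : T.domain, c * ‖(u : E)‖ ≤ ‖T.smulSub ζ u‖)
    (hsurj : Function.Surjective (T.smulSub ζ)) : InResolvent T ζ := by
  have hinj : Function.Injective (T.smulSub ζ) := by
    refine (injective_iff_map_eq_zero _).mpr fun u hu => ?_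
    have := hbdd u
    rw [hu, norm_zero] at this
    exact Subtype.ext (norm_le_zero_iff.mp (nonpos_of_mul_nonpos_right this hc))
  let e := LinearEquiv.ofBijective (T.smulSub ζ) ⟨hinj, hsurj⟩
  have hbound : ∀ f, ‖e.symm f‖ ≤ c⁻¹ * ‖f‖ := fun f => by
    have := hbdd (e.symm f)
    rwa [← le_inv_mul_iff₀ hc, show T.smulSub ζ (e.symm f) = f from e.apply_symm_apply f] at this
  exact inResolvent_iff_exists_inverse.mpr ⟨(e.symm : E →ₗ[ℂ] T.domain).mkContinuous c⁻¹ hbound,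
    e.symm_apply_apply, e.apply_symm_apply⟩

end Resolvent

section SelfAdjoint

variable {E : Type*} [NormedAddCommGroup E] [InnerProductSpace ℂ E] [CompleteSpace E]
  {A : E →ₗ.[ℂ] E}

theorem IsSelfAdjoint.mem_graph_of_forall_inner (hA : IsSelfAdjoint A) {x w : E}
    (h : ∀ v : A.domain, inner ℂ w (v : E) = inner ℂ x (A v)) : (x, w) ∈ A.graph := by
  have hx : x ∈ A.adjoint.domain := LinearPMap.mem_adjoint_domain_of_exists x ⟨w, h⟩
  have hgraph : (x, w) ∈ A.adjoint.graph :=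
    A.adjoint.mem_graph_iff.mpr ⟨⟨x, hx⟩, rfl, LinearPMap.adjoint_apply_eq hA.dense_domain _ h⟩
  rwa [LinearPMap.isSelfAdjoint_def.mp hA] at hgraph

theorem IsSelfAdjoint.inResolvent_of_coercive (hA : IsSelfAdjoint A) {c : ℝ} (hc : 0 < c)
    (hcoer : ∀ u : A.domain, c * ‖(u : E)‖ ^ 2 ≤ (inner ℂ (-(A u)) (u : E)).re)
    {ζ : ℂ} (hζ : 0 ≤ ζ.re) : InResolvent A ζ := by
  have hbdd := A.mul_norm_le_norm_smulSub hcoer hζ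
  have hclosed := hA.isClosed.isClosed_range_smulSub ζ hc hbdd
  have : CompleteSpace (LinearMap.range (A.smulSub ζ)) := hclosed.completeSpace_coe
  have hdense : (LinearMap.range (A.smulSub ζ))ᗮ = ⊥ := by
    refine (Submodule.eq_bot_iff _).mpr fun x hx => ?_
    have horth : ∀ v : A.domain, inner ℂ (A.smulSub ζ v) x = 0 := fun v =>
      (Submodule.mem_orthogonal _ _).mp hx _ (LinearMap.mem_range_self _ v)
    -- `x ⊥ ran (ζ - A)` makes `x` an eigenvector of `A = A†` for `conj ζ`, which coercivity forbids
    have hgraph : (x, (starRingEnd ℂ) ζ • x) ∈ A.graph := by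
      refine hA.mem_graph_of_forall_inner fun v => ?_
      have := congrArg (starRingEnd ℂ) (horth v)
      rw [LinearPMap.smulSub_apply, inner_sub_left, inner_smul_left, map_sub, map_mul,
        inner_conj_symm, inner_conj_symm, map_zero, sub_eq_zero] at this
      rw [inner_smul_left, ← this]
    obtain ⟨y, rfl, hy⟩ := A.mem_graph_iff.mp hgraph
    have hbddy := A.mul_norm_le_norm_smulSub hcoer (ζ := (starRingEnd ℂ) ζ) (by simpa using hζ) y
    rw [LinearPMap.smulSub_apply, hy, sub_self, norm_zero] at hbddy
    exact norm_le_zero_iff.mp (nonpos_of_mul_nonpos_right hbddy hc)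
  refine inResolvent_of_surjective hc hbdd (LinearMap.range_eq_top.mp ?_)
  exact Submodule.orthogonal_eq_bot_iff.mp hdense

end SelfAdjoint

section Perturbation

variable {E : Type*} [NormedAddCommGroup E] [InnerProductSpace ℂ E]

def IsRelCompactMap (T : E →ₗ.[ℂ] E) (P : T.domain →ₗ[ℂ] E) : Prop :=
  ∀ u : ℕ → T.domain, (∃ M : ℝ, ∀ k, ‖(u k : E)‖ + ‖T (u k)‖ ≤ M) →
    ∃ φ : ℕ → ℕ, StrictMono φ ∧ ∃ l : E, Tendsto (fun k => P (u (φ k))) atTop (𝓝 l)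

theorem IsRelCompactMap.smul {T : E →ₗ.[ℂ] E} {P : T.domain →ₗ[ℂ] E}
    (hP : IsRelCompactMap T P) (c : ℂ) : IsRelCompactMap T (c • P) := fun u hu => by
  obtain ⟨φ, hφ, l, hl⟩ := hP u hu
  exact ⟨φ, hφ, c • l, hl.const_smul c⟩

theorem IsRelCompact.isRelCompactMap {A Λ : E →ₗ.[ℂ] E} {h : A.domain ≤ Λ.domain}
    (hcpt : IsRelCompact A Λ h) : IsRelCompactMap A (Λ.toFun ∘ₗ Submodule.inclusion h) :=
  hcpt

variable [CompleteSpace E]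

theorem InResolvent.sub_of_isRelCompactMap {T : E →ₗ.[ℂ] E} {P : T.domain →ₗ[ℂ] E} {ζ : ℂ}
    (hT : InResolvent T ζ) (hP : IsRelCompactMap T P)
    (hinj : ∀ u : T.domain, ζ • (u : E) - (T u - P u) = 0 → (u : E) = 0) :
    InResolvent ⟨T.domain, T.toFun - P⟩ ζ := by
  obtain ⟨S, hSl, hSr⟩ := inResolvent_iff_exists_inverse.mp hT
  have hTS : ∀ f, T (S f) = ζ • (S f : E) - f := fun f =>
    (sub_sub_cancel _ _).symm.trans (congrArg (ζ • (S f : E) - ·) (hSr f))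
  let K : E →ₗ[ℂ] E := P ∘ₗ (S : E →ₗ[ℂ] T.domain)
  -- compact because `S` maps bounded sets to sets bounded in the graph norm of `T`
  have hK : IsCompactOperator K := by
    refine isCompactOperator_of_forall_exists_tendsto_subseq K fun f ⟨M, hM⟩ =>
      hP (S ∘ f) ⟨(‖S‖ + ‖ζ‖ * ‖S‖ + 1) * M, fun k => ?_⟩
    have hSf : ‖(S (f k) : E)‖ ≤ ‖S‖ * ‖f k‖ := S.le_opNorm (f k)
    have hζSf : ‖ζ • (S (f k) : E) - f k‖ ≤ ‖ζ‖ * (‖S‖ * ‖f k‖) + ‖f k‖ := by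
      grw [norm_sub_le, norm_smul, hSf]
    have hfM : (‖S‖ + ‖ζ‖ * ‖S‖ + 1) * ‖f k‖ ≤ (‖S‖ + ‖ζ‖ * ‖S‖ + 1) * M := by
      gcongr; exact hM k
    simp only [Function.comp_apply, hTS]
    nlinarith
  let Kc : E →L[ℂ] E := ⟨K, hK.continuous⟩
  have hfactor : ∀ u : T.domain, ζ • (u : E) - (T u - P u) = (1 + Kc) (T.smulSub ζ u) := fun u => by
    change _ = T.smulSub ζ u + P (S (T.smulSub ζ u))
    rw [hSl u, LinearPMap.smulSub_apply]
    abel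
  have hunit : IsUnit (1 + Kc) := hK.isUnit_one_add fun f hf => by
    have hu := hinj (S f) (by rw [hfactor, hSr f]; exact hf)
    rw [← hSr f, show S f = 0 from Subtype.ext hu, map_zero]
  let R : E →L[ℂ] E := ↑hunit.unit⁻¹
  have hleft : ∀ f, R ((1 + Kc) f) = f := fun f =>
    congrArg (fun L : E →L[ℂ] E => L f) hunit.val_inv_mul
  have hright : ∀ f, (1 + Kc) (R f) = f := fun f =>
    congrArg (fun L : E →L[ℂ] E => L f) hunit.mul_val_inv
  refine inResolvent_iff_exists_inverse.mpr ⟨S.comp R, fun u => ?_, fun f => ?_⟩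
  · change S (R (ζ • (u : E) - (T u - P u))) = u
    rw [hfactor, hleft, hSl u]
  · change ζ • (S (R f) : E) - (T (S (R f)) - P (S (R f))) = f
    rw [hfactor, hSr, hright]

end Perturbation

section Injective

variable {E : Type*} [NormedAddCommGroup E] [InnerProductSpace ℂ E] {N : Submodule ℂ E}

theorem mem_of_apply_eq_zero_of_fixes_orthogonal [N.HasOrthogonalProjection] {Q : E →L[ℂ] E}
    (hQid : ∀ u ∈ Nᗮ, Q u = u) (hQzero : ∀ u ∈ N, Q u = 0) {x : E} (hx : Q x = 0) : x ∈ N := by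
  obtain ⟨y, hy, z, hz, rfl⟩ := N.exists_add_mem_mem_orthogonal x
  rw [map_add, hQzero y hy, hQid z hz, zero_add] at hx
  rwa [hx, add_zero]

theorem inner_apply_eq_of_sub_mem {B : E →L[ℂ] E} (hB : (B : E →ₗ[ℂ] E).IsSymmetric)
    (hBN : ∀ u ∈ N, B u = 0) {x x' y y' : E} (hx : x - x' ∈ N) (hy : y - y' ∈ N) :
    inner ℂ x (B y) = inner ℂ x' (B y') := by
  have hBx : B x = B x' := sub_eq_zero.mp (by rw [← map_sub]; exact hBN _ hx)
  have hBy : B y = B y' := sub_eq_zero.mp (by rw [← map_sub]; exact hBN _ hy)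
  calc inner ℂ x (B y) = inner ℂ (B x) y' := by rw [hBy]; exact (hB x y').symm
    _ = inner ℂ x' (B y') := by rw [hBx]; exact hB x' y'

variable {A Λ : E →ₗ.[ℂ] E} {hsub : A.domain ≤ Λ.domain} {C_A α : ℝ} {ζ : ℂ}

theorem apply_eq_zero_of_pmapL_eq_smul [N.HasOrthogonalProjection] {Q B₂ : E →L[ℂ] E} {C : ℝ}
    (hQmem : ∀ u : E, Q u ∈ Nᗮ) (hQid : ∀ u ∈ Nᗮ, Q u = u) (hQzero : ∀ u ∈ N, Q u = 0)
    (hQA : ∀ u : A.domain, ∃ h : Q (u : E) ∈ A.domain, Q (A u) = A ⟨Q (u : E), h⟩)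
    (hB₂ : (B₂ : E →ₗ[ℂ] E).IsSymmetric) (hB₂N : ∀ u ∈ N, B₂ u = 0)
    (hCA : 0 < C_A) (hC : 0 < C)
    (hcoer : ∀ u : A.domain, C_A * ‖(u : E)‖ ^ 2 ≤ (inner ℂ (-(A u)) (u : E)).re)
    (hB₂pos : ∀ u ∈ Nᗮ, C * ‖u‖ ^ 2 ≤ (inner ℂ u (B₂ u)).re)
    (hAB₂ : ∀ u : A.domain, (u : E) ∈ Nᗮ →
      C * (inner ℂ (-(A u)) (u : E)).re ≤ (inner ℂ (-(A u)) (B₂ (u : E))).re)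
    (hΛB₂ : ∀ u : Λ.domain, (inner ℂ (Λ u) (B₂ (u : E))).im = 0)
    (hζ : 0 ≤ ζ.re) {u : A.domain} (hu : pmapL A Λ hsub α u = ζ • (u : E)) : Q u = 0 := by
  obtain ⟨hv, hQAu⟩ := hQA u
  set v : A.domain := ⟨Q u, hv⟩
  have hvN : (v : E) ∈ Nᗮ := hQmem u
  have hker : ∀ x, Q x = 0 → x ∈ N := fun x => mem_of_apply_eq_zero_of_fixes_orthogonal hQid hQzero
  -- `B₂` does not see the `N`-components `u - Qu` and (by `QA ⊂ AQ`) `Au - AQu`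
  have huv : (u : E) - v ∈ N := hker _ (by rw [map_sub, hQid _ hvN, sub_self])
  have hAuv : A u - A v ∈ N := hker _ (by
    obtain ⟨hvv, hQAv⟩ := hQA v
    rw [map_sub, hQAu, hQAv, show (⟨Q v, hvv⟩ : A.domain) = v from Subtype.ext (hQid _ hvN),
      sub_self])
  have hr := inner_apply_eq_of_sub_mem hB₂ hB₂N huv huv
  have hAr := inner_apply_eq_of_sub_mem hB₂ hB₂N hAuv huv
  have hζu : (inner ℂ (ζ • (u : E)) (B₂ u)).re = ζ.re * (inner ℂ (v : E) (B₂ v)).re := by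
    have him : (inner ℂ (v : E) (B₂ v)).im = 0 := hB₂.im_inner_self_apply v
    rw [inner_smul_left, hr, Complex.mul_re, him]
    simp
  have hΛu : (inner ℂ ((Complex.I * α) • Λ (Submodule.inclusion hsub u)) (B₂ u)).re = 0 := by
    have him : (inner ℂ (Λ (Submodule.inclusion hsub u)) (B₂ u)).im = 0 := hΛB₂ _
    rw [inner_smul_left, Complex.mul_re, him]
    simp
  have hbalance : ζ.re * (inner ℂ (v : E) (B₂ v)).re = (inner ℂ (A v) (B₂ v)).re := by
    rw [← hζu, ← hu, ← hAr]
    change (inner ℂ (A u - (Complex.I * α) • Λ (Submodule.inclusion hsub u)) (B₂ u)).re = _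
    rw [inner_sub_left, Complex.sub_re, hΛu, sub_zero]
  have hv0 : ‖(v : E)‖ ^ 2 ≤ 0 := by
    have h1 := hAB₂ v hvN
    have h2 := hcoer v
    simp only [inner_neg_left, Complex.neg_re] at h1 h2
    nlinarith [hB₂pos _ hvN, mul_nonneg hζ (sq_nonneg ‖(v : E)‖), mul_pos hC hCA]
  exact norm_eq_zero.mp (pow_eq_zero_iff two_ne_zero |>.mp (le_antisymm hv0 (sq_nonneg _)))

theorem eq_zero_of_pmapL_eq_smul_of_mem_ker
    (hcoer : ∀ u : A.domain, C_A * ‖(u : E)‖ ^ 2 ≤ (inner ℂ (-(A u)) (u : E)).re)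
    (hCA : 0 < C_A) (hζ : 0 ≤ ζ.re) {u : A.domain} (hu : pmapL A Λ hsub α u = ζ • (u : E))
    (hker : (u : E) ∈ (LinearMap.ker Λ.toFun).map Λ.domain.subtype) : (u : E) = 0 := by
  have hΛu : Λ (Submodule.inclusion hsub u) = 0 := by
    obtain ⟨w, hw, hwu⟩ := hker
    rwa [show Submodule.inclusion hsub u = w from Subtype.ext hwu.symm]
  have hAu : A.smulSub ζ u = 0 := by
    change A u - (Complex.I * α) • Λ (Submodule.inclusion hsub u) = ζ • (u : E) at hu
    rw [LinearPMap.smulSub_apply, ← hu, hΛu, smul_zero, sub_zero, sub_self]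
  have hbdd := A.mul_norm_le_norm_smulSub hcoer hζ u
  rw [hAu, norm_zero] at hbdd
  exact norm_le_zero_iff.mp (nonpos_of_mul_nonpos_right hbdd hCA)

end Injective

theorem stmt_8_general (A Λ : X →ₗ.[ℂ] X) (hA : IsSelfAdjoint A)
    (C_A : ℝ) (hCA : 0 < C_A)
    (hcoer : ∀ u : A.domain, C_A * ‖(u : X)‖ ^ 2 ≤ (inner ℂ (-(A u)) ((u : X)) : ℂ).re)
    (hsub : A.domain ≤ Λ.domain)
    (hcpt : IsRelCompact A Λ hsub)
    (N : Submodule ℂ X)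
    (hN : N = (LinearMap.ker Λ.toFun).map Λ.domain.subtype)
    (hNclosed : IsClosed (N : Set X))
    (Q : X →L[ℂ] X)
    (hQmem : ∀ u : X, Q u ∈ Nᗮ)
    (hQid : ∀ u ∈ Nᗮ, Q u = u)
    (hQzero : ∀ u ∈ N, Q u = 0)
    (hQA : ∀ u : A.domain, ∃ h : Q (u : X) ∈ A.domain, Q (A u) = A ⟨Q (u : X), h⟩)
    (B₂ : X →L[ℂ] X) (hB₂ : IsSelfAdjoint B₂)
    (hkerB₂ : ∀ u : X, B₂ u = 0 ↔ u ∈ N)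
    (C : ℝ) (hC : 0 < C)
    (hB₂pos : ∀ u ∈ Nᗮ, C * ‖u‖ ^ 2 ≤ (inner ℂ u (B₂ u) : ℂ).re)
    (hAB₂ : ∀ u : A.domain, (u : X) ∈ Nᗮ →
      C * (inner ℂ (-(A u)) ((u : X)) : ℂ).re ≤ (inner ℂ (-(A u)) (B₂ (u : X)) : ℂ).re)
    (hΛB₂ : ∀ u : Λ.domain, (inner ℂ (Λ u) (B₂ (u : X)) : ℂ).im = 0)
    (α : ℝ) :
    ∀ ζ : ℂ, 0 ≤ ζ.re → InResolvent (pmapL A Λ hsub α) ζ := by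
  intro ζ hζ
  have : CompleteSpace N := hNclosed.completeSpace_coe
  refine (hA.inResolvent_of_coercive hCA hcoer hζ).sub_of_isRelCompactMap
    (hcpt.isRelCompactMap.smul (Complex.I * α)) fun u hu => ?_
  replace hu := (sub_eq_zero.mp hu).symm
  have hQu := apply_eq_zero_of_pmapL_eq_smul hQmem hQid hQzero hQA hB₂.isSymmetric
    (fun u => (hkerB₂ u).mpr) hCA hC hcoer hB₂pos hAB₂ hΛB₂ hζ hu
  exact eq_zero_of_pmapL_eq_smul_of_mem_ker hcoer hCA hζ hu
    (hN ▸ mem_of_apply_eq_zero_of_fixes_orthogonal hQid hQzero hQu)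

/-- Lemma `L:Res_Half` of the paper.  `A` is self-adjoint with `(−Au,u) ≥ C_A‖u‖²`;
`Λ` is closed, densely defined and `A`-compact; `N = ker Λ`; `Q` is the orthogonal
projection of `X` onto `N^⊥`, and `QA ⊂ AQ`; `B₂` is a bounded self-adjoint operator
with `ker B₂ = N`, `(u,B₂u) ≥ C‖u‖²` on `N^⊥`,
`Re(−Au, B₂u) ≥ C‖(−A)^{1/2}u‖² = C·(−Au,u)` on `D(A) ∩ N^⊥`, and `Im(Λu, B₂u) = 0`
on `D(Λ)` (the content of Assumption `As:La_02` via `Λ = B₁B₂`).  Then the spectrum of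
`L_α = A − iαΛ` lies in the open left half-plane: `{Re ζ ≥ 0} ⊂ ρ(L_α)` for all `α ∈ ℝ`. -/
theorem stmt_8 (A Λ : X →ₗ.[ℂ] X) (hA : IsSelfAdjoint A)
    (C_A : ℝ) (hCA : 0 < C_A)
    (hcoer : ∀ u : A.domain, C_A * ‖(u : X)‖ ^ 2 ≤ (inner ℂ (-(A u)) ((u : X)) : ℂ).re)
    (hΛdense : Dense (Λ.domain : Set X))
    (hΛclosed : IsClosed (Λ.graph : Set (X × X)))
    (hsub : A.domain ≤ Λ.domain)
    (hcpt : IsRelCompact A Λ hsub)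
    (N : Submodule ℂ X)
    (hN : N = (LinearMap.ker Λ.toFun).map Λ.domain.subtype)
    (hNclosed : IsClosed (N : Set X))
    (Q : X →L[ℂ] X)
    (hQmem : ∀ u : X, Q u ∈ Nᗮ)
    (hQid : ∀ u ∈ Nᗮ, Q u = u)
    (hQzero : ∀ u ∈ N, Q u = 0)
    (hQA : ∀ u : A.domain, ∃ h : Q (u : X) ∈ A.domain, Q (A u) = A ⟨Q (u : X), h⟩)
    (B₂ : X →L[ℂ] X) (hB₂ : IsSelfAdjoint B₂)
    (hkerB₂ : ∀ u : X, B₂ u = 0 ↔ u ∈ N)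
    (C : ℝ) (hC : 0 < C)
    (hB₂pos : ∀ u ∈ Nᗮ, C * ‖u‖ ^ 2 ≤ (inner ℂ u (B₂ u) : ℂ).re)
    (hAB₂ : ∀ u : A.domain, (u : X) ∈ Nᗮ →
      C * (inner ℂ (-(A u)) ((u : X)) : ℂ).re ≤ (inner ℂ (-(A u)) (B₂ (u : X)) : ℂ).re)
    (hΛB₂ : ∀ u : Λ.domain, (inner ℂ (Λ u) (B₂ (u : X)) : ℂ).im = 0)
    (α : ℝ) :
    ∀ ζ : ℂ, 0 ≤ ζ.re → InResolvent (pmapL A Λ hsub α) ζ :=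
  stmt_8_general A Λ hA C_A hCA hcoer hsub hcpt N hN hNclosed Q hQmem hQid hQzero hQA B₂ hB₂ hkerB₂
    C hC hB₂pos hAB₂ hΛB₂ α
end

section
/- Let X be a Hilbert space, A self-adjoint on X with QA ⊂ AQ where Q is the orthogonal projection onto Y = (ker Λ)^⊥ and P = I − Q, Λ closed densely defined and A-compact, and L_α = A − iαΛ. Then ρ_X(L_α) = ρ_Y(QL_α) ∩ ρ_N(PA), where QL_α = QA − iαQΛ acts in Y with domain D(A) ∩ Y and PA acts in N = ker Λ with domain D(A) ∩ N. Moreover, for ζ ∈ ρ_X(L_α) and f ∈ X, Q(ζ − L_α)^{−1} f = (ζ − QL_α)^{−1} Q f. -/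
/-!
Split `X = Nᗮ ⊕ N`. Because `Q` commutes with `A` and `Λ` vanishes on `N`, for `y ∈ Nᗮ` and
`n ∈ N` in `D(A)`
  `(ζ - L_α)(y + n) = (ζ - QL_α) y + (iα PΛ y + (ζ - PA) n)`
with the first summand in `Nᗮ` and the second in `N`: `ζ - L_α` is lower block-triangular. So it
is boundedly invertible once both diagonal blocks are, provided the off-diagonal block `PΛ` is
bounded by `ζ - QL_α` on `Nᗮ`; this holds because a closed `A`-compact operator is `A`-bounded with
arbitrarily small relative bound. Conversely, if `ζ ∈ ρ_X(L_α)` then `ζ - PA` is bounded below on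
`N`; as `PA` is the part of the self-adjoint `A` in the reducing subspace `N`, its range is closed
and its orthogonal complement in `N` consists of eigenvectors of `A`, so it is onto `N`. Solving
`(ζ - PA) n = -iα PΛ y` then shows that `ζ - QL_α` inherits the lower bound of `ζ - L_α`.
-/

open Filter

variable {X : Type*} [NormedAddCommGroup X] [InnerProductSpace ℂ X] [CompleteSpace X]

/-- `ζ` belongs to the resolvent set of the operator `T` restricted to the (invariant)
closed subspace `Y`, with domain `D(T) ∩ Y`: `ζ − T : D(T) ∩ Y → Y` is injective,
onto `Y`, and has bounded inverse. -/
def ResolventOn (T : X →ₗ.[ℂ] X) (Y : Submodule ℂ X) (ζ : ℂ) : Prop :=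
  (∀ u v : T.domain, (u : X) ∈ Y → (v : X) ∈ Y →
      ζ • (u : X) - T u = ζ • (v : X) - T v → (u : X) = (v : X)) ∧
  (∀ f ∈ Y, ∃ u : T.domain, (u : X) ∈ Y ∧ ζ • (u : X) - T u = f) ∧
  (∃ C : ℝ, ∀ u : T.domain, (u : X) ∈ Y → ‖(u : X)‖ ≤ C * ‖ζ • (u : X) - T u‖)

open Topology

namespace LinearPMap

section Kernel

variable {R E F : Type*} [CommRing R] [AddCommGroup E] [Module R E] [AddCommGroup F] [Module R F]
  {T : E →ₗ.[R] F}

def ker (T : E →ₗ.[R] F) : Submodule R E :=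
  (LinearMap.ker T.toFun).map T.domain.subtype

theorem apply_eq_zero_of_mem_ker {x : E} (hx : x ∈ T.domain) (h : x ∈ T.ker) :
    T ⟨x, hx⟩ = 0 := by
  obtain ⟨y, hy, rfl⟩ := h
  exact hy

variable [TopologicalSpace E] [TopologicalSpace F]

theorem IsClosed.exists_apply_eq_of_tendsto [T2Space E] (hT : T.IsClosed) {ι : Type*}
    {l : Filter ι} [l.NeBot] {u : ι → T.domain} {x : E} {y : F}
    (hu : Tendsto (fun i => (u i : E)) l (𝓝 x)) (hTu : Tendsto (fun i => T (u i)) l (𝓝 y)) :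
    ∃ hx : x ∈ T.domain, T ⟨x, hx⟩ = y := by
  have hxy : (x, y) ∈ T.graph :=
    hT.mem_of_tendsto (hu.prodMk_nhds hTu) (Eventually.of_forall fun i => T.mem_graph (u i))
  obtain ⟨z, rfl, rfl⟩ := T.mem_graph_iff.mp hxy
  exact ⟨z.2, rfl⟩

theorem IsClosed.isClosed_ker (hT : T.IsClosed) : _root_.IsClosed (T.ker : Set E) := by
  have hker : (T.ker : Set E) = (fun x => (x, (0 : F))) ⁻¹' T.graph := by
    ext x
    simp [ker, T.mem_graph_iff]
  rw [hker]
  exact hT.preimage (continuous_id.prodMk continuous_const)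

end Kernel

section ResolventRange

variable {𝕜 E : Type*} [RCLike 𝕜] [NormedAddCommGroup E] [NormedSpace 𝕜 E]

def resolventRange (T : E →ₗ.[𝕜] E) (K : Submodule 𝕜 E) (ζ : 𝕜) : Submodule 𝕜 E :=
  (K.comap T.domain.subtype).map (ζ • T.domain.subtype - T.toFun)

theorem mem_resolventRange {T : E →ₗ.[𝕜] E} {K : Submodule 𝕜 E} {ζ : 𝕜} {f : E} :
    f ∈ T.resolventRange K ζ ↔ ∃ u : T.domain, (u : E) ∈ K ∧ ζ • (u : E) - T u = f :=
  Iff.rfl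

theorem IsClosed.isClosed_resolventRange [CompleteSpace E] {T : E →ₗ.[𝕜] E} (hT : T.IsClosed)
    {K : Submodule 𝕜 E} (hK : _root_.IsClosed (K : Set E)) {ζ : 𝕜} {C : ℝ}
    (hC : ∀ u : T.domain, (u : E) ∈ K → ‖(u : E)‖ ≤ C * ‖ζ • (u : E) - T u‖) :
    _root_.IsClosed (T.resolventRange K ζ : Set E) := by
  refine IsSeqClosed.isClosed fun f g hf hfg => ?_
  choose u huK hu using fun j => mem_resolventRange.mp (hf j)
  have hcauchy : CauchySeq fun j => (u j : E) := by
    have hfc := cauchySeq_iff_tendsto_dist_atTop_0.mp hfg.cauchySeq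
    refine cauchySeq_iff_tendsto_dist_atTop_0.mpr <|
      squeeze_zero (fun _ => dist_nonneg) (fun p => ?_) (by simpa using hfc.const_mul C)
    calc dist (u p.1 : E) (u p.2) = ‖((u p.1 - u p.2 : T.domain) : E)‖ := dist_eq_norm _ _
      _ ≤ C * ‖ζ • ((u p.1 - u p.2 : T.domain) : E) - T (u p.1 - u p.2)‖ :=
        hC _ (K.sub_mem (huK p.1) (huK p.2))
      _ = C * dist (f p.1) (f p.2) := by
        rw [dist_eq_norm, ← hu, ← hu, map_sub, Submodule.coe_sub, smul_sub, sub_sub_sub_comm]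
  obtain ⟨x, hx⟩ := cauchySeq_tendsto_of_complete hcauchy
  have hTu : Tendsto (fun j => T (u j)) atTop (𝓝 (ζ • x - g)) := by
    refine ((hx.const_smul ζ).sub hfg).congr fun j => ?_
    rw [← hu]
    abel
  obtain ⟨hxT, hTx⟩ := hT.exists_apply_eq_of_tendsto hx hTu
  refine mem_resolventRange.mpr ⟨⟨x, hxT⟩, hK.mem_of_tendsto hx (Eventually.of_forall huK), ?_⟩
  rw [hTx]
  abel

end ResolventRange

end LinearPMap

section SelfAdjoint

variable {𝕜 E : Type*} [RCLike 𝕜] [NormedAddCommGroup E] [InnerProductSpace 𝕜 E]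
  {A : E →ₗ.[𝕜] E}

local notation "⟪" x ", " y "⟫" => inner 𝕜 x y

namespace Submodule

variable {K : Submodule 𝕜 E} [K.HasOrthogonalProjection]

theorem starProjection_add_of_mem_orthogonal {a b : E} (ha : a ∈ K) (hb : b ∈ Kᗮ) :
    K.starProjection (a + b) = a := by
  rw [map_add, starProjection_eq_self_iff.mpr ha, (K.starProjection_apply_eq_zero_iff).mpr hb,
    add_zero]

/-- `K` reduces `A`: in the paper's notation, `QA ⊂ AQ` for the orthogonal projection `Q`
onto `K`. -/
def Reduces (K : Submodule 𝕜 E) [K.HasOrthogonalProjection] (A : E →ₗ.[𝕜] E) : Prop :=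
  ∀ u : A.domain, ∃ h : K.starProjection (u : E) ∈ A.domain, K.starProjection (A u) = A ⟨_, h⟩

theorem Reduces.starProjection_mem (hK : K.Reduces A) (u : A.domain) :
    K.starProjection (u : E) ∈ A.domain :=
  (hK u).1

theorem Reduces.starProjection_apply (hK : K.Reduces A) (u : A.domain) :
    K.starProjection (A u) = A ⟨_, hK.starProjection_mem u⟩ :=
  (hK u).2

theorem Reduces.apply_mem (hK : K.Reduces A) {u : A.domain} (hu : (u : E) ∈ K) : A u ∈ K := by
  have hKu : (⟨_, hK.starProjection_mem u⟩ : A.domain) = u :=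
    Subtype.ext (starProjection_eq_self_iff.mpr hu)
  rw [← hKu, ← hK.starProjection_apply]
  exact K.starProjection_apply_mem _

theorem Reduces.smul_sub_apply_mem (hK : K.Reduces A) (ζ : 𝕜) {u : A.domain}
    (hu : (u : E) ∈ K) : ζ • (u : E) - A u ∈ K :=
  K.sub_mem (K.smul_mem ζ hu) (hK.apply_mem hu)

theorem Reduces.of_orthogonal (hK : Kᗮ.Reduces A) : K.Reduces A := by
  have hP : ∀ x, K.starProjection x = x - Kᗮ.starProjection x := fun x =>
    eq_sub_of_add_eq (K.starProjection_add_starProjection_orthogonal x)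
  intro u
  have hPu : K.starProjection (u : E) ∈ A.domain :=
    hP u ▸ A.domain.sub_mem u.2 (hK.starProjection_mem u)
  refine ⟨hPu, ?_⟩
  have hsplit : (⟨_, hPu⟩ : A.domain) = u - ⟨_, hK.starProjection_mem u⟩ := Subtype.ext (hP u)
  rw [hsplit, A.map_sub, ← hK.starProjection_apply, hP]

theorem Reduces.add_starProjection (hQ : Kᗮ.Reduces A) (hP : K.Reduces A) (u : A.domain) :
    (⟨_, hQ.starProjection_mem u⟩ + ⟨_, hP.starProjection_mem u⟩ : A.domain) = u :=
  Subtype.ext <| by simp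

end Submodule

variable [CompleteSpace E]

open scoped ComplexConjugate in
theorem IsSelfAdjoint.exists_apply_eq_smul_of_inner_apply (hA : IsSelfAdjoint A) {g : E}
    {ζ : 𝕜} (h : ∀ x : A.domain, ⟪g, A x⟫ = ζ * ⟪g, (x : E)⟫) :
    ∃ hg : g ∈ A.domain, A ⟨g, hg⟩ = ζ • g := by
  have hadj : ∀ x : A.domain, ⟪conj ζ • g, (x : E)⟫ = ⟪g, A x⟫ := fun x => by
    rw [inner_smul_left, RCLike.conj_conj, h]
  have hgA : (g, conj ζ • g) ∈ A.graph := by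
    have hg := LinearPMap.mem_adjoint_domain_of_exists g ⟨_, hadj⟩
    have h' : (g, A.adjoint ⟨g, hg⟩) ∈ A.adjoint.graph := A.adjoint.mem_graph ⟨g, hg⟩
    rwa [LinearPMap.adjoint_apply_eq hA.dense_domain ⟨g, hg⟩ hadj,
      LinearPMap.isSelfAdjoint_def.mp hA] at h'
  obtain ⟨y, rfl, hAy⟩ := A.mem_graph_iff.mp hgA
  refine ⟨y.2, ?_⟩
  rcases eq_or_ne (y : E) 0 with hy0 | hy0
  · obtain rfl : y = 0 := Subtype.ext hy0
    exact A.map_zero.trans (smul_zero ζ).symm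
  have hreal : conj ζ = ζ := by
    have hyy := h y
    rw [hAy, inner_smul_right] at hyy
    exact mul_right_cancel₀ (inner_self_ne_zero.mpr hy0) hyy
  rw [← hreal]
  exact hAy

/-- A vector of `K` orthogonal to the range is an eigenvector of `A` for `ζ`, which the lower
bound rules out. -/
theorem IsSelfAdjoint.resolventRange_eq (hA : IsSelfAdjoint A) {K : Submodule 𝕜 E}
    [K.HasOrthogonalProjection] (hK : K.Reduces A) {ζ : 𝕜} {C : ℝ}
    (hC : ∀ u : A.domain, (u : E) ∈ K → ‖(u : E)‖ ≤ C * ‖ζ • (u : E) - A u‖) :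
    A.resolventRange K ζ = K := by
  set R := A.resolventRange K ζ
  have hRK : R ≤ K := fun f hf => by
    obtain ⟨u, hu, rfl⟩ := LinearPMap.mem_resolventRange.mp hf
    exact hK.smul_sub_apply_mem ζ hu
  have hKclosed : IsClosed (K : Set E) := K.orthogonal_orthogonal ▸ Kᗮ.isClosed_orthogonal
  have : CompleteSpace R := (hA.isClosed.isClosed_resolventRange hKclosed hC).completeSpace_coe
  refine le_antisymm hRK fun f hf => ?_
  set g := f - R.starProjection f
  have hgK : g ∈ K := K.sub_mem hf (hRK (R.starProjection_apply_mem f))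
  have hgR : g ∈ Rᗮ := R.sub_starProjection_mem_orthogonal f
  have hgA : ∀ x : A.domain, ⟪g, A x⟫ = ζ * ⟪g, (x : E)⟫ := fun x => by
    let m : A.domain := ⟨_, hK.starProjection_mem x⟩
    have hm : ⟪g, ζ • (m : E) - A m⟫ = 0 := Submodule.inner_left_of_mem_orthogonal
      (LinearPMap.mem_resolventRange.mpr ⟨m, K.starProjection_apply_mem _, rfl⟩) hgR
    rw [inner_sub_right, inner_smul_right, sub_eq_zero] at hm
    rw [← Submodule.starProjection_eq_self_iff.mpr hgK,
      Submodule.inner_starProjection_left_eq_right, Submodule.inner_starProjection_left_eq_right,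
      hK.starProjection_apply, ← hm]
  obtain ⟨hgD, hAg⟩ := hA.exists_apply_eq_smul_of_inner_apply hgA
  have hg0 : g = 0 := by
    have hg := hC ⟨g, hgD⟩ hgK
    rwa [hAg, sub_self, norm_zero, mul_zero, norm_le_zero_iff] at hg
  rw [sub_eq_zero.mp hg0]
  exact R.starProjection_apply_mem f

end SelfAdjoint

theorem Complex.norm_I_mul_ofReal (α : ℝ) : ‖Complex.I * α‖ = |α| := by
  rw [norm_mul, Complex.norm_I, one_mul, Complex.norm_real, Real.norm_eq_abs]

section RelativeBound

variable {E : Type*} [NormedAddCommGroup E] [InnerProductSpace ℂ E] {A Λ : E →ₗ.[ℂ] E}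
  {hsub : A.domain ≤ Λ.domain}

/-- Otherwise there are `v k` with `‖Λ v k‖ = 1` and `ε ‖A v k‖ + (k + 1) ‖v k‖ < 1`: along a
subsequence `Λ v k` converges to some `l` with `‖l‖ = 1`, while `v k → 0`, so closedness of `Λ`
forces `l = 0`. -/
theorem IsRelCompact.exists_one_le_of_norm_eq_one (hΛ : Λ.IsClosed)
    (hcpt : IsRelCompact A Λ hsub) {ε : ℝ} (hε : 0 < ε) :
    ∃ c : ℝ, 0 ≤ c ∧
      ∀ u : A.domain, ‖Λ ⟨u, hsub u.2⟩‖ = 1 → 1 ≤ ε * ‖A u‖ + c * ‖(u : E)‖ := by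
  by_contra! hcon
  choose v hv1 hv using fun k : ℕ => hcon (k + 1) (by positivity)
  have hvX : ∀ k, ‖(v k : E)‖ ≤ 1 / ((k : ℝ) + 1) := fun k => by
    rw [le_div_iff₀' (by positivity)]
    linarith [hv k, show 0 ≤ ε * ‖A (v k)‖ by positivity]
  have hv0 : Tendsto (fun k => (v k : E)) atTop (𝓝 0) :=
    squeeze_zero_norm hvX tendsto_one_div_add_atTop_nhds_zero_nat
  have hbdd : ∀ k, ‖(v k : E)‖ + ‖A (v k)‖ ≤ 1 + ε⁻¹ := fun k => by
    have h1 : ‖(v k : E)‖ ≤ 1 :=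
      (hvX k).trans (div_le_one_of_le₀ (le_add_of_nonneg_left k.cast_nonneg) (by positivity))
    have h2 : ‖A (v k)‖ ≤ ε⁻¹ := by
      rw [← one_div, le_div_iff₀' hε]
      linarith [hv k, show 0 ≤ ((k : ℝ) + 1) * ‖(v k : E)‖ by positivity]
    linarith
  obtain ⟨φ, hφ, l, hl⟩ := hcpt v ⟨_, hbdd⟩
  have hl1 : ‖l‖ = 1 := tendsto_nhds_unique hl.norm (by simp [hv1])
  obtain ⟨_, hl0⟩ := hΛ.exists_apply_eq_of_tendsto
    (u := fun k => (⟨v (φ k), hsub (v (φ k)).2⟩ : Λ.domain)) (hv0.comp hφ.tendsto_atTop) hl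
  rw [← hl0, show (⟨0, _⟩ : Λ.domain) = 0 from rfl, Λ.map_zero, norm_zero] at hl1
  exact zero_ne_one hl1

theorem IsRelCompact.exists_norm_le (hΛ : Λ.IsClosed) (hcpt : IsRelCompact A Λ hsub) {ε : ℝ}
    (hε : 0 < ε) :
    ∃ c : ℝ, 0 ≤ c ∧ ∀ u : A.domain, ‖Λ ⟨u, hsub u.2⟩‖ ≤ ε * ‖A u‖ + c * ‖(u : E)‖ := by
  obtain ⟨c, hc, h⟩ := hcpt.exists_one_le_of_norm_eq_one hΛ hε
  refine ⟨c, hc, fun u => ?_⟩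
  rcases (norm_nonneg (Λ ⟨u, hsub u.2⟩)).eq_or_lt with hr | hr
  · rw [← hr]
    positivity
  set r := ‖Λ ⟨u, hsub u.2⟩‖
  have hsmul : ∀ a : ℂ, Λ ⟨((a • u : A.domain) : E), hsub (a • u).2⟩ = a • Λ ⟨u, hsub u.2⟩ :=
    fun a => (Λ.toFun ∘ₗ Submodule.inclusion hsub).map_smul a u
  have hnorm : ∀ x : E, ‖(r : ℂ)⁻¹ • x‖ = r⁻¹ * ‖x‖ := fun x => by
    rw [norm_smul, norm_inv, Complex.norm_real, Real.norm_of_nonneg hr.le]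
  have h1 := h ((r : ℂ)⁻¹ • u) (by rw [hsmul, hnorm, inv_mul_cancel₀ hr.ne'])
  rw [A.map_smul, Submodule.coe_smul, hnorm, hnorm, mul_left_comm, mul_left_comm c, ← mul_add]
    at h1
  rwa [le_inv_mul_iff₀ hr, mul_one] at h1

end RelativeBound

section ResolventOn

variable {E : Type*} [NormedAddCommGroup E] [InnerProductSpace ℂ E] {T : E →ₗ.[ℂ] E}
  {Y : Submodule ℂ E} {ζ : ℂ}

theorem resolventOn_iff :
    ResolventOn T Y ζ ↔ (∀ f ∈ Y, ∃ u : T.domain, (u : E) ∈ Y ∧ ζ • (u : E) - T u = f) ∧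
      ∃ C, 0 ≤ C ∧ ∀ u : T.domain, (u : E) ∈ Y → ‖(u : E)‖ ≤ C * ‖ζ • (u : E) - T u‖ := by
  constructor
  · rintro ⟨-, hsurj, C, hC⟩
    exact ⟨hsurj, max C 0, le_max_right _ _, fun u hu =>
      (hC u hu).trans (mul_le_mul_of_nonneg_right (le_max_left _ _) (norm_nonneg _))⟩
  · rintro ⟨hsurj, C, -, hC⟩
    refine ⟨fun u v hu hv huv => ?_, hsurj, C, hC⟩
    have h := hC (u - v) (Y.sub_mem hu hv)
    rw [T.map_sub, Submodule.coe_sub, smul_sub, sub_sub_sub_comm, huv, sub_self, norm_zero,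
      mul_zero, norm_le_zero_iff] at h
    exact sub_eq_zero.mp h

theorem resolventOn_mk_iff {g : T.domain →ₗ[ℂ] E} (h : ∀ u : T.domain, (u : E) ∈ Y → g u = T u) :
    ResolventOn ⟨T.domain, g⟩ Y ζ ↔ ResolventOn T Y ζ := by
  simp only [resolventOn_iff, LinearPMap.mk_apply]
  refine and_congr (forall₂_congr fun f _ => exists_congr fun u => ?_)
    (exists_congr fun C => and_congr_right fun _ => forall₂_congr fun u hu => by rw [h u hu])
  exact and_congr_right fun hu => by rw [h u hu]

end ResolventOn

section Splitting

variable {E : Type*} [NormedAddCommGroup E] [InnerProductSpace ℂ E] {A Λ : E →ₗ.[ℂ] E}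
  {hsub : A.domain ≤ Λ.domain} {α : ℝ} {ζ : ℂ} {N : Submodule ℂ E}

theorem pmapL_apply (u : A.domain) :
    pmapL A Λ hsub α u = A u - (Complex.I * α) • Λ ⟨u, hsub u.2⟩ :=
  rfl

theorem pmapL_apply_of_mem (hNΛ : N ≤ Λ.ker) {n : A.domain} (hn : (n : E) ∈ N) :
    pmapL A Λ hsub α n = A n := by
  rw [pmapL_apply, Λ.apply_eq_zero_of_mem_ker _ (hNΛ hn), smul_zero, sub_zero]

variable [N.HasOrthogonalProjection]

variable (A Λ hsub α N) in
noncomputable def pmapQL : E →ₗ.[ℂ] E :=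
  ⟨A.domain, Nᗮ.starProjection.toLinearMap.comp (pmapL A Λ hsub α).toFun⟩

theorem pmapQL_apply (u : A.domain) :
    pmapQL A Λ hsub α N u = Nᗮ.starProjection (pmapL A Λ hsub α u) :=
  rfl

theorem smul_sub_pmapQL_mem {y : A.domain} (hy : (y : E) ∈ Nᗮ) :
    ζ • (y : E) - pmapQL A Λ hsub α N y ∈ Nᗮ :=
  Nᗮ.sub_mem (Nᗮ.smul_mem ζ hy) (Nᗮ.starProjection_apply_mem _)

theorem smul_sub_pmapL_add (hNΛ : N ≤ Λ.ker) (hQ : Nᗮ.Reduces A) {y n : A.domain}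
    (hy : (y : E) ∈ Nᗮ) (hn : (n : E) ∈ N) :
    ζ • ((y + n : A.domain) : E) - pmapL A Λ hsub α (y + n) =
      (ζ • (y : E) - pmapQL A Λ hsub α N y) +
        ((Complex.I * α) • N.starProjection (Λ ⟨y, hsub y.2⟩) + (ζ • (n : E) - A n)) := by
  have hQAy : Nᗮ.starProjection (A y) = A y :=
    Submodule.starProjection_eq_self_iff.mpr (hQ.apply_mem hy)
  have hPΛy : N.starProjection (Λ ⟨y, hsub y.2⟩) =
      Λ ⟨y, hsub y.2⟩ - Nᗮ.starProjection (Λ ⟨y, hsub y.2⟩) :=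
    eq_sub_of_add_eq (N.starProjection_add_starProjection_orthogonal _)
  have hΛ : Λ ⟨((y + n : A.domain) : E), hsub (y + n).2⟩ = Λ ⟨y, hsub y.2⟩ := by
    rw [show (⟨((y + n : A.domain) : E), hsub (y + n).2⟩ : Λ.domain) =
      ⟨y, hsub y.2⟩ + ⟨n, hsub n.2⟩ from rfl, Λ.map_add, Λ.apply_eq_zero_of_mem_ker _ (hNΛ hn),
      add_zero]
  rw [pmapL_apply, hΛ, A.map_add, pmapQL_apply, pmapL_apply, map_sub, map_smul, hQAy, hPΛy,
    Submodule.coe_add, smul_add]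
  module

theorem starProjection_orthogonal_smul_sub_pmapL (hNΛ : N ≤ Λ.ker) (hQ : Nᗮ.Reduces A)
    (hP : N.Reduces A) (u : A.domain) :
    Nᗮ.starProjection (ζ • (u : E) - pmapL A Λ hsub α u) =
      ζ • Nᗮ.starProjection (u : E) - pmapQL A Λ hsub α N ⟨_, hQ.starProjection_mem u⟩ := by
  have hy := Nᗮ.starProjection_apply_mem (u : E)
  have hn := N.starProjection_apply_mem (u : E)
  conv_lhs => rw [← hQ.add_starProjection hP u, smul_sub_pmapL_add hNΛ hQ hy hn]
  exact Nᗮ.starProjection_add_of_mem_orthogonal (smul_sub_pmapQL_mem hy)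
    (N.le_orthogonal_orthogonal (N.add_mem (N.smul_mem _ (N.starProjection_apply_mem _))
      (hP.smul_sub_apply_mem ζ hn)))

theorem starProjection_smul_sub_pmapL (hNΛ : N ≤ Λ.ker) (hQ : Nᗮ.Reduces A) (hP : N.Reduces A)
    (u : A.domain) :
    N.starProjection (ζ • (u : E) - pmapL A Λ hsub α u) =
      (Complex.I * α) • N.starProjection (Λ ⟨_, hsub (hQ.starProjection_mem u)⟩) +
        (ζ • N.starProjection (u : E) - A ⟨_, hP.starProjection_mem u⟩) := by
  have hy := Nᗮ.starProjection_apply_mem (u : E)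
  have hn := N.starProjection_apply_mem (u : E)
  conv_lhs => rw [← hQ.add_starProjection hP u, smul_sub_pmapL_add hNΛ hQ hy hn, add_comm]
  exact N.starProjection_add_of_mem_orthogonal
    (N.add_mem (N.smul_mem _ (N.starProjection_apply_mem _)) (hP.smul_sub_apply_mem ζ hn))
    (smul_sub_pmapQL_mem hy)

theorem resolventOn_ker_of_resolventOn_top [CompleteSpace E] (hA : IsSelfAdjoint A)
    (hNΛ : N ≤ Λ.ker) (hP : N.Reduces A) (h : ResolventOn (pmapL A Λ hsub α) ⊤ ζ) :
    ResolventOn A N ζ := by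
  obtain ⟨-, C, hC0, hC⟩ := resolventOn_iff.mp h
  have hbound : ∀ n : A.domain, (n : E) ∈ N → ‖(n : E)‖ ≤ C * ‖ζ • (n : E) - A n‖ :=
    fun n hn => by
      rw [← pmapL_apply_of_mem (hsub := hsub) (α := α) hNΛ hn]
      exact hC n trivial
  refine resolventOn_iff.mpr ⟨fun f hf => ?_, C, hC0, hbound⟩
  exact LinearPMap.mem_resolventRange.mp ((hA.resolventRange_eq hP hbound).ge hf)

theorem resolventOn_orthogonal_of_resolventOn_top (hNΛ : N ≤ Λ.ker) (hQ : Nᗮ.Reduces A)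
    (hP : N.Reduces A) (h : ResolventOn (pmapL A Λ hsub α) ⊤ ζ) (hN : ResolventOn A N ζ) :
    ResolventOn (pmapQL A Λ hsub α N) Nᗮ ζ := by
  obtain ⟨hsurj, C, hC0, hC⟩ := resolventOn_iff.mp h
  obtain ⟨hsurjN, -⟩ := resolventOn_iff.mp hN
  refine resolventOn_iff.mpr ⟨fun f hf => ?_, C, hC0, fun (y : A.domain) hy => ?_⟩
  · obtain ⟨u, -, rfl⟩ := hsurj f trivial
    refine ⟨⟨_, hQ.starProjection_mem u⟩, Nᗮ.starProjection_apply_mem _, ?_⟩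
    exact (starProjection_orthogonal_smul_sub_pmapL hNΛ hQ hP u).symm.trans
      (Submodule.starProjection_eq_self_iff.mpr hf)
  obtain ⟨n, hn, hnf⟩ := hsurjN (-((Complex.I * α) • N.starProjection (Λ ⟨y, hsub y.2⟩)))
    (N.neg_mem (N.smul_mem _ (N.starProjection_apply_mem _)))
  calc ‖(y : E)‖ = ‖Nᗮ.starProjection ((y + n : A.domain) : E)‖ := by
        rw [Submodule.coe_add, Nᗮ.starProjection_add_of_mem_orthogonal hy
          (N.le_orthogonal_orthogonal hn)]
    _ ≤ ‖((y + n : A.domain) : E)‖ := Nᗮ.norm_starProjection_apply_le _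
    _ ≤ C * ‖ζ • ((y + n : A.domain) : E) - pmapL A Λ hsub α (y + n)‖ := hC (y + n) trivial
    _ = C * ‖ζ • (y : E) - pmapQL A Λ hsub α N y‖ := by
        rw [smul_sub_pmapL_add hNΛ hQ hy hn, hnf, add_neg_cancel, add_zero]

theorem exists_norm_le_of_resolventOn_orthogonal (hΛ : Λ.IsClosed)
    (hcpt : IsRelCompact A Λ hsub) (hQ : Nᗮ.Reduces A)
    (h : ResolventOn (pmapQL A Λ hsub α N) Nᗮ ζ) :
    ∃ K, 0 ≤ K ∧ ∀ y : A.domain, (y : E) ∈ Nᗮ →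
      ‖Λ ⟨y, hsub y.2⟩‖ ≤ K * ‖ζ • (y : E) - pmapQL A Λ hsub α N y‖ := by
  obtain ⟨-, C, hC0, hC⟩ := resolventOn_iff.mp h
  set ε : ℝ := (2 * (|α| + 1))⁻¹
  have hε : 0 < ε := by positivity
  have hεα : ε * |α| ≤ 1 / 2 := by
    rw [← div_eq_inv_mul, div_le_div_iff₀ (by positivity) two_pos]
    linarith [abs_nonneg α]
  obtain ⟨c, hc0, hc⟩ := hcpt.exists_norm_le hΛ hε
  refine ⟨2 * (ε + (ε * ‖ζ‖ + c) * C), by positivity, fun y hy => ?_⟩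
  set s := ζ • (y : E) - pmapQL A Λ hsub α N y with hs
  have hAy : A y = ζ • (y : E) - s + (Complex.I * α) • Nᗮ.starProjection (Λ ⟨y, hsub y.2⟩) := by
    rw [hs, pmapQL_apply, pmapL_apply, map_sub, map_smul,
      Submodule.starProjection_eq_self_iff.mpr (hQ.apply_mem hy)]
    abel
  set l := Λ ⟨y, hsub y.2⟩
  have hA : ‖A y‖ ≤ ‖ζ‖ * ‖(y : E)‖ + ‖s‖ + |α| * ‖l‖ := by
    rw [hAy, ← norm_smul]
    refine (norm_add_le _ _).trans (add_le_add (norm_sub_le _ _) ?_)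
    rw [norm_smul, Complex.norm_I_mul_ofReal]
    gcongr
    exact Nᗮ.norm_starProjection_apply_le l
  have h1 : ε * ‖A y‖ ≤ ε * (‖ζ‖ * ‖(y : E)‖ + ‖s‖ + |α| * ‖l‖) := by gcongr
  have h2 : ε * |α| * ‖l‖ ≤ 1 / 2 * ‖l‖ := by gcongr
  have h3 : (ε * ‖ζ‖ + c) * ‖(y : E)‖ ≤ (ε * ‖ζ‖ + c) * (C * ‖s‖) := by gcongr; exact hC y hy
  linarith [hc y]

theorem exists_smul_sub_pmapL_eq (hNΛ : N ≤ Λ.ker) (hQ : Nᗮ.Reduces A)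
    (hq : ResolventOn (pmapQL A Λ hsub α N) Nᗮ ζ) (hp : ResolventOn A N ζ) (f : E) :
    ∃ u : A.domain, ζ • (u : E) - pmapL A Λ hsub α u = f := by
  obtain ⟨(y : A.domain), hy, hyf⟩ := hq.2.1 _ (Nᗮ.starProjection_apply_mem f)
  obtain ⟨n, hn, hnf⟩ := hp.2.1
    (N.starProjection f - (Complex.I * α) • N.starProjection (Λ ⟨y, hsub y.2⟩))
    (N.sub_mem (N.starProjection_apply_mem f) (N.smul_mem _ (N.starProjection_apply_mem _)))
  refine ⟨y + n, ?_⟩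
  rw [smul_sub_pmapL_add hNΛ hQ hy hn, hyf, hnf, add_sub_cancel, add_comm,
    N.starProjection_add_starProjection_orthogonal]

theorem exists_norm_le_of_resolventOn (hΛ : Λ.IsClosed) (hcpt : IsRelCompact A Λ hsub)
    (hNΛ : N ≤ Λ.ker) (hQ : Nᗮ.Reduces A) (hP : N.Reduces A)
    (hq : ResolventOn (pmapQL A Λ hsub α N) Nᗮ ζ) (hp : ResolventOn A N ζ) :
    ∃ C, 0 ≤ C ∧ ∀ u : A.domain, ‖(u : E)‖ ≤ C * ‖ζ • (u : E) - pmapL A Λ hsub α u‖ := by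
  obtain ⟨K, hK0, hK⟩ := exists_norm_le_of_resolventOn_orthogonal hΛ hcpt hQ hq
  obtain ⟨-, Cq, hCq0, hCq⟩ := resolventOn_iff.mp hq
  obtain ⟨-, Cp, hCp0, hCp⟩ := resolventOn_iff.mp hp
  refine ⟨Cq + Cp * (1 + |α| * K), by positivity, fun u => ?_⟩
  have hQf := starProjection_orthogonal_smul_sub_pmapL (hsub := hsub) (ζ := ζ) (α := α) hNΛ hQ hP u
  have hPf := starProjection_smul_sub_pmapL (hsub := hsub) (ζ := ζ) (α := α) hNΛ hQ hP u
  set f := ζ • (u : E) - pmapL A Λ hsub α u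
  set y : A.domain := ⟨_, hQ.starProjection_mem u⟩
  set n : A.domain := ⟨_, hP.starProjection_mem u⟩
  have hy : ‖(y : E)‖ ≤ Cq * ‖f‖ :=
    (hCq y (Nᗮ.starProjection_apply_mem _)).trans
      (by gcongr; exact hQf ▸ Nᗮ.norm_starProjection_apply_le f)
  have hn : ‖(n : E)‖ ≤ Cp * ((1 + |α| * K) * ‖f‖) := by
    refine (hCp n (N.starProjection_apply_mem _)).trans (mul_le_mul_of_nonneg_left ?_ hCp0)
    calc ‖ζ • (n : E) - A n‖
        = ‖N.starProjection f - (Complex.I * α) • N.starProjection (Λ ⟨y, hsub y.2⟩)‖ := by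
          rw [hPf, add_sub_cancel_left]
      _ ≤ ‖f‖ + |α| * ‖Λ ⟨y, hsub y.2⟩‖ := by
          refine (norm_sub_le _ _).trans ?_
          rw [norm_smul, Complex.norm_I_mul_ofReal]
          gcongr
          · exact N.norm_starProjection_apply_le f
          · exact N.norm_starProjection_apply_le _
      _ ≤ ‖f‖ + |α| * (K * ‖f‖) := by
          gcongr
          exact (hK y (Nᗮ.starProjection_apply_mem _)).trans
            (by gcongr; exact hQf ▸ Nᗮ.norm_starProjection_apply_le f)
      _ = (1 + |α| * K) * ‖f‖ := by ring
  calc ‖(u : E)‖ = ‖(y : E) + n‖ := by rw [← Submodule.coe_add, hQ.add_starProjection hP u]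
    _ ≤ (Cq + Cp * (1 + |α| * K)) * ‖f‖ := by linarith [norm_add_le (y : E) n]

theorem resolventOn_top_of_resolventOn (hΛ : Λ.IsClosed) (hcpt : IsRelCompact A Λ hsub)
    (hNΛ : N ≤ Λ.ker) (hQ : Nᗮ.Reduces A) (hP : N.Reduces A)
    (hq : ResolventOn (pmapQL A Λ hsub α N) Nᗮ ζ) (hp : ResolventOn A N ζ) :
    ResolventOn (pmapL A Λ hsub α) ⊤ ζ :=
  have ⟨C, hC0, hC⟩ := exists_norm_le_of_resolventOn hΛ hcpt hNΛ hQ hP hq hp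
  resolventOn_iff.mpr
    ⟨fun f _ => (exists_smul_sub_pmapL_eq hNΛ hQ hq hp f).imp fun _ hu => ⟨trivial, hu⟩,
      C, hC0, fun u _ => hC u⟩

end Splitting

theorem stmt_9_general (A Λ : X →ₗ.[ℂ] X) (hA : IsSelfAdjoint A)
    (hΛclosed : IsClosed (Λ.graph : Set (X × X)))
    (hsub : A.domain ≤ Λ.domain)
    (hcpt : IsRelCompact A Λ hsub)
    (N : Submodule ℂ X)
    (hN : N = (LinearMap.ker Λ.toFun).map Λ.domain.subtype)
    (Q : X →L[ℂ] X)
    (hQid : ∀ u ∈ Nᗮ, Q u = u)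
    (hQzero : ∀ u ∈ N, Q u = 0)
    (hQA : ∀ u : A.domain, ∃ h : Q (u : X) ∈ A.domain, Q (A u) = A ⟨Q (u : X), h⟩)
    (α : ℝ) (ζ : ℂ) :
    (ResolventOn (pmapL A Λ hsub α) ⊤ ζ ↔
      (ResolventOn ⟨A.domain, Q.toLinearMap.comp (pmapL A Λ hsub α).toFun⟩ Nᗮ ζ ∧
        ResolventOn ⟨A.domain, (LinearMap.id - Q.toLinearMap).comp A.toFun⟩ N ζ)) ∧
    (ResolventOn (pmapL A Λ hsub α) ⊤ ζ →
      ∀ (f : X) (u : (pmapL A Λ hsub α).domain),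
        ζ • (u : X) - pmapL A Λ hsub α u = f →
        ∀ w : A.domain, (w : X) ∈ Nᗮ →
          ζ • (w : X) - Q (pmapL A Λ hsub α ⟨(w : X), w.2⟩) = Q f →
          Q (u : X) = (w : X)) := by
  have hΛ : Λ.IsClosed := hΛclosed
  have hNΛ : N ≤ Λ.ker := hN.le
  have : CompleteSpace N := (hN ▸ hΛ.isClosed_ker : IsClosed (N : Set X)).completeSpace_coe
  obtain rfl : Q = Nᗮ.starProjection := ContinuousLinearMap.ext fun x => by
    conv_lhs => rw [← N.starProjection_add_starProjection_orthogonal x]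
    rw [map_add, hQzero _ (N.starProjection_apply_mem x), hQid _ (Nᗮ.starProjection_apply_mem x),
      zero_add]
  have hQ : Nᗮ.Reduces A := hQA
  have hP : N.Reduces A := hQ.of_orthogonal
  have hPA : ResolventOn ⟨A.domain, (LinearMap.id - Nᗮ.starProjection.toLinearMap).comp A.toFun⟩
      N ζ ↔ ResolventOn A N ζ :=
    resolventOn_mk_iff fun n hn => by
      have hQAn : Nᗮ.starProjection (A n) = 0 :=
        (Nᗮ.starProjection_apply_eq_zero_iff).mpr (N.le_orthogonal_orthogonal (hP.apply_mem hn))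
      simp [hQAn]
  have hforward (h : ResolventOn (pmapL A Λ hsub α) ⊤ ζ) :
      ResolventOn (pmapQL A Λ hsub α N) Nᗮ ζ ∧ ResolventOn A N ζ :=
    have hp := resolventOn_ker_of_resolventOn_top hA hNΛ hP h
    ⟨resolventOn_orthogonal_of_resolventOn_top hNΛ hQ hP h hp, hp⟩
  rw [hPA]
  refine ⟨⟨hforward, fun ⟨hq, hp⟩ => resolventOn_top_of_resolventOn hΛ hcpt hNΛ hQ hP hq hp⟩,
    fun h f u hu w hw hwf => ?_⟩
  refine (hforward h).1.1 ⟨_, hQ.starProjection_mem u⟩ w (Nᗮ.starProjection_apply_mem _) hw ?_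
  exact (starProjection_orthogonal_smul_sub_pmapL hNΛ hQ hP u).symm.trans (hu ▸ hwf.symm)

/-- Lemma `L:PS_Res` of the paper.  With `A` self-adjoint, `Λ` closed densely defined
and `A`-compact, `N = ker Λ`, `Y = N^⊥`, `Q` the orthogonal projection onto `Y`
(so `P = I − Q` projects onto `N`) with `QA ⊂ AQ`:
`ρ_X(L_α) = ρ_Y(QL_α) ∩ ρ_N(PA)`, where `L_α = A − iαΛ` with domain `D(A)`,
`QL_α = QA − iαQΛ` acts in `Y` with domain `D(A) ∩ Y`, and `PA` acts in `N` with
domain `D(A) ∩ N`.  Moreover, for `ζ ∈ ρ_X(L_α)` and `f ∈ X`,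
`Q(ζ − L_α)^{−1}f = (ζ − QL_α)^{−1}Qf`. -/
theorem stmt_9 (A Λ : X →ₗ.[ℂ] X) (hA : IsSelfAdjoint A)
    (hΛdense : Dense (Λ.domain : Set X))
    (hΛclosed : IsClosed (Λ.graph : Set (X × X)))
    (hsub : A.domain ≤ Λ.domain)
    (hcpt : IsRelCompact A Λ hsub)
    (N : Submodule ℂ X)
    (hN : N = (LinearMap.ker Λ.toFun).map Λ.domain.subtype)
    (Q : X →L[ℂ] X)
    (hQmem : ∀ u : X, Q u ∈ Nᗮ)
    (hQid : ∀ u ∈ Nᗮ, Q u = u)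
    (hQzero : ∀ u ∈ N, Q u = 0)
    (hQA : ∀ u : A.domain, ∃ h : Q (u : X) ∈ A.domain, Q (A u) = A ⟨Q (u : X), h⟩)
    (α : ℝ) (ζ : ℂ) :
    (ResolventOn (pmapL A Λ hsub α) ⊤ ζ ↔
      (ResolventOn ⟨A.domain, Q.toLinearMap.comp (pmapL A Λ hsub α).toFun⟩ Nᗮ ζ ∧
        ResolventOn ⟨A.domain, (LinearMap.id - Q.toLinearMap).comp A.toFun⟩ N ζ)) ∧
    (ResolventOn (pmapL A Λ hsub α) ⊤ ζ →
      ∀ (f : X) (u : (pmapL A Λ hsub α).domain),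
        ζ • (u : X) - pmapL A Λ hsub α u = f →
        ∀ w : A.domain, (w : X) ∈ Nᗮ →
          ζ • (w : X) - Q (pmapL A Λ hsub α ⟨(w : X), w.2⟩) = Q f →
          Q (u : X) = (w : X)) :=
  stmt_9_general A Λ hA hΛclosed hsub hcpt N hN Q hQid hQzero hQA α ζ
end

section
/- Let m ∈ ℤ∖{0}, μ ∈ ℂ with Im μ ≠ 0, and let u = Σ_{n ≥ max(2,|m|)} c_n Y_n^m ∈ L²(S²) satisfy μ u = cos θ · (I + 6Δ^{−1}) u. Then u = c Y_2^m for some constant c if |m| ∈ {1,2}, and u = 0 if |m| ≥ 3. -/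
open Real

/-- Eigenvalue `λ_n = n(n+1)` of `−Δ` on the unit sphere `S²`. -/
def lam (n : ℕ) : ℝ := n * (n + 1)

/-- The recurrence coefficient `a_n^m = √((n−m)(n+m)/((2n−1)(2n+1)))` in
`cos θ · Y_n^m = a_n^m Y_{n−1}^m + a_{n+1}^m Y_{n+1}^m`. -/
noncomputable def aCoef (n : ℕ) (m : ℤ) : ℝ :=
  Real.sqrt ((((n : ℝ) - (m : ℝ)) * ((n : ℝ) + (m : ℝ))) / ((2 * (n : ℝ) - 1) * (2 * (n : ℝ) + 1)))

/-!
Write `A` for the symmetric tridiagonal matrix of multiplication by `cos θ` (off-diagonal entries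
`a_{n+1}`) and `B` for the diagonal matrix of `I + 6Δ⁻¹` (entries `b_n = 1 - 6/λ_n`), so that the
equation reads `μ c = A B c`. Pairing with `B c` gives `μ ⟨Bc, c⟩ = ⟨Bc, A Bc⟩`, whose right side is
real up to a boundary term; on the first `K + 1` coefficients this is
`Im μ · Σ_{n ≤ K} b_n |c_n|² = W_K` with `W_K = b_K b_{K+1} a_{K+1} Im (c̄_K c_{K+1})`.
Since `c ∈ ℓ²` the boundary term tends to zero, so `Σ b_n |c_n|² = 0`. All terms are nonnegative
(`c_0 = c_1 = 0` and `b_n ≥ 0` for `n ≥ 2`) and `b_n > 0` for `n ≥ 3`, hence `c_n = 0` for `n ≥ 3`.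
-/

open Filter Topology Finset ComplexConjugate

lemma six_le_lam {n : ℕ} (hn : 2 ≤ n) : 6 ≤ lam n := by
  have : (2 : ℝ) ≤ n := by exact_mod_cast hn
  unfold lam
  nlinarith

lemma six_lt_lam {n : ℕ} (hn : 3 ≤ n) : 6 < lam n := by
  have : (3 : ℝ) ≤ n := by exact_mod_cast hn
  unfold lam
  nlinarith

lemma one_sub_six_div_lam_nonneg {n : ℕ} (hn : 2 ≤ n) : 0 ≤ 1 - 6 / lam n := by
  have h := six_le_lam hn
  exact sub_nonneg.mpr ((div_le_one (by linarith)).mpr h)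

lemma one_sub_six_div_lam_pos {n : ℕ} (hn : 3 ≤ n) : 0 < 1 - 6 / lam n := by
  have h := six_lt_lam hn
  exact sub_pos.mpr ((div_lt_one (by linarith)).mpr h)

lemma one_sub_six_div_lam_le_one (n : ℕ) : 1 - 6 / lam n ≤ 1 := by
  have : 0 ≤ lam n := by unfold lam; positivity
  have : 0 ≤ 6 / lam n := by positivity
  linarith

lemma aCoef_le_one {n : ℕ} (hn : 1 ≤ n) (m : ℤ) : aCoef n m ≤ 1 := by
  have hn' : (1 : ℝ) ≤ n := by exact_mod_cast hn
  rw [aCoef, Real.sqrt_le_one, div_le_one (by nlinarith)]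
  nlinarith [sq_nonneg (m : ℝ)]

lemma norm_offDiag_coef_le_one {n : ℕ} (hn : 2 ≤ n) (m : ℤ) :
    ‖(1 - 6 / lam n) * (1 - 6 / lam (n + 1)) * aCoef (n + 1) m‖ ≤ 1 := by
  have hb := one_sub_six_div_lam_nonneg hn
  have hb' := one_sub_six_div_lam_nonneg (n := n + 1) (by omega)
  have ha : 0 ≤ aCoef (n + 1) m := Real.sqrt_nonneg _
  rw [Real.norm_of_nonneg (by positivity)]
  exact mul_le_one₀ (mul_le_one₀ (one_sub_six_div_lam_le_one n) hb'
    (one_sub_six_div_lam_le_one (n + 1))) ha (aCoef_le_one (by omega) m)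

lemma im_mul_norm_sq_of_eq {μ x y z : ℂ} {p q : ℝ} (h : μ * y = p * z + q * x) :
    μ.im * ‖y‖ ^ 2 = p * (conj y * z).im - q * (conj x * y).im := by
  have hre := congrArg Complex.re h
  have him := congrArg Complex.im h
  simp only [Complex.mul_re, Complex.mul_im, Complex.add_re, Complex.add_im, Complex.ofReal_re,
    Complex.ofReal_im] at hre him
  simp only [Complex.mul_im, Complex.conj_re, Complex.conj_im, Complex.sq_norm,
    Complex.normSq_apply]
  linear_combination y.re * him - y.im * hre

lemma tendsto_atTop_zero_of_summable_norm_sq {E : Type*} [SeminormedAddCommGroup E] {c : ℕ → E}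
    (hsum : Summable fun n => ‖c n‖ ^ 2) :
    Tendsto c atTop (𝓝 0) := by
  rw [tendsto_zero_iff_norm_tendsto_zero]
  simpa using hsum.tendsto_atTop_zero.sqrt

section JacobiRecurrence

variable {a b : ℕ → ℝ} {μ : ℂ} {c : ℕ → ℂ}

/-- Imaginary part of the discrete Wronskian of `c` for the symmetrised operator `B A B`. -/
noncomputable def wronskianIm (a b : ℕ → ℝ) (c : ℕ → ℂ) (n : ℕ) : ℝ :=
  b n * b (n + 1) * a (n + 1) * (conj (c n) * c (n + 1)).im

lemma im_mul_sum_weighted_norm_sq_eq_wronskianIm (h0 : c 0 = 0)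
    (hrec : ∀ n, c (n + 1) ≠ 0 →
      μ * c (n + 1) = ((b (n + 2) * a (n + 2) : ℝ) : ℂ) * c (n + 2)
        + ((b n * a (n + 1) : ℝ) : ℂ) * c n)
    (K : ℕ) : μ.im * ∑ n ∈ range (K + 1), b n * ‖c n‖ ^ 2 = wronskianIm a b c K := by
  induction K with
  | zero => simp [wronskianIm, h0]
  | succ K ih =>
    rw [sum_range_succ, mul_add, ih]
    by_cases hK : c (K + 1) = 0
    · simp [wronskianIm, hK]
    · have := im_mul_norm_sq_of_eq (hrec K hK)
      unfold wronskianIm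
      linear_combination b (K + 1) * this

lemma tendsto_wronskianIm_atTop_zero
    (hab : IsBoundedUnder (· ≤ ·) atTop fun n => ‖b n * b (n + 1) * a (n + 1)‖)
    (hc : Tendsto c atTop (𝓝 0)) : Tendsto (wronskianIm a b c) atTop (𝓝 0) := by
  have hprod : Tendsto (fun n => conj (c n) * c (n + 1)) atTop (𝓝 0) := by
    simpa using (hc.star).mul (hc.comp (tendsto_add_atTop_nat 1))
  have him : Tendsto (fun n => (conj (c n) * c (n + 1)).im) atTop (𝓝 0) := by
    have := (Complex.continuous_im.tendsto 0).comp hprod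
    rwa [Complex.zero_im] at this
  exact isBoundedUnder_le_mul_tendsto_zero hab him

lemma weighted_norm_sq_eq_zero_of_im_ne_zero (hμ : μ.im ≠ 0) (h0 : c 0 = 0)
    (hrec : ∀ n, c (n + 1) ≠ 0 →
      μ * c (n + 1) = ((b (n + 2) * a (n + 2) : ℝ) : ℂ) * c (n + 2)
        + ((b n * a (n + 1) : ℝ) : ℂ) * c n)
    (hab : IsBoundedUnder (· ≤ ·) atTop fun n => ‖b n * b (n + 1) * a (n + 1)‖)
    (hc : Tendsto c atTop (𝓝 0)) (hnonneg : ∀ n, 0 ≤ b n * ‖c n‖ ^ 2) (n : ℕ) :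
    b n * ‖c n‖ ^ 2 = 0 := by
  have hpartial : ∀ K, ∑ n ∈ range (K + 1), b n * ‖c n‖ ^ 2 = wronskianIm a b c K / μ.im :=
    fun K => by
      rw [eq_div_iff hμ, mul_comm, im_mul_sum_weighted_norm_sq_eq_wronskianIm h0 hrec]
  have hlim : Tendsto (fun K => ∑ n ∈ range (K + 1), b n * ‖c n‖ ^ 2) atTop (𝓝 0) := by
    simpa only [hpartial, zero_div] using (tendsto_wronskianIm_atTop_zero hab hc).div_const μ.im
  have hsum : HasSum (fun n => b n * ‖c n‖ ^ 2) 0 :=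
    (hasSum_iff_tendsto_nat_of_nonneg hnonneg 0).mpr ((tendsto_add_atTop_iff_nat 1).mp hlim)
  exact congrFun ((hasSum_zero_iff_of_nonneg hnonneg).mp hsum) n

end JacobiRecurrence

theorem stmt_11_general (m : ℤ) (μ : ℂ) (hμ : μ.im ≠ 0) (c : ℕ → ℂ)
    (hsupp : ∀ n, n < max 2 m.natAbs → c n = 0)
    (hsum : Summable fun n => ‖c n‖ ^ 2)
    (heq : ∀ n, max 1 m.natAbs ≤ n →
      μ * c n = (((1 - 6 / lam (n + 1)) * aCoef (n + 1) m : ℝ) : ℂ) * c (n + 1)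
        + (((1 - 6 / lam (n - 1)) * aCoef n m : ℝ) : ℂ) * c (n - 1)) :
    ((m.natAbs = 1 ∨ m.natAbs = 2) → ∀ n, n ≠ 2 → c n = 0) ∧
    (3 ≤ m.natAbs → ∀ n, c n = 0) := by
  set a : ℕ → ℝ := fun n => aCoef n m
  set b : ℕ → ℝ := fun n => 1 - 6 / lam n
  have hc_lt_two : ∀ n < 2, c n = 0 := fun n hn => hsupp n (lt_max_of_lt_left hn)
  have hrec : ∀ n, c (n + 1) ≠ 0 →
      μ * c (n + 1) = ((b (n + 2) * a (n + 2) : ℝ) : ℂ) * c (n + 2)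
        + ((b n * a (n + 1) : ℝ) : ℂ) * c n := fun n hn =>
    heq (n + 1) (not_lt.mp fun h => hn (hsupp _ (h.trans_le (max_le_max_right _ one_le_two))))
  have hterm_zero := weighted_norm_sq_eq_zero_of_im_ne_zero hμ (hc_lt_two 0 two_pos) hrec
    (isBoundedUnder_of_eventually_le (eventually_atTop.mpr ⟨2, fun n hn =>
      norm_offDiag_coef_le_one hn m⟩))
    (tendsto_atTop_zero_of_summable_norm_sq hsum) fun n => by
      rcases lt_or_ge n 2 with hn | hn
      · simp [hc_lt_two n hn]
      · exact mul_nonneg (one_sub_six_div_lam_nonneg hn) (by positivity)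
  have hc_ge_three : ∀ n, 3 ≤ n → c n = 0 := fun n hn => by
    simpa using (mul_eq_zero.mp (hterm_zero n)).resolve_left (one_sub_six_div_lam_pos hn).ne'
  refine ⟨fun _ n hn => ?_, fun hm n => ?_⟩
  · rcases lt_or_ge n 2 with h | h
    · exact hc_lt_two n h
    · exact hc_ge_three n (by omega)
  · rcases lt_or_ge n m.natAbs with h | h
    · exact hsupp n (lt_max_of_lt_right h)
    · exact hc_ge_three n (hm.trans h)

/-- Case `Im μ ≠ 0` in the proof of Theorem `T:NoEi_Pm`, stated in terms of the
coefficients of the expansion `u = Σ_{n ≥ max(2,|m|)} c_n Y_n^m ∈ P_m L²₀(S²)`.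
Since `cos θ · Y_n^m = a_n^m Y_{n−1}^m + a_{n+1}^m Y_{n+1}^m` and
`(I + 6Δ^{−1})Y_n^m = (1 − 6/λ_n)Y_n^m`, the equation `μ u = cos θ · (I + 6Δ^{−1})u`
is equivalent to the stated coefficient recurrence.  Conclusion: `u = c Y_2^m` for
some constant if `|m| ∈ {1,2}`, and `u = 0` if `|m| ≥ 3`. -/
theorem stmt_11 (m : ℤ) (hm : m ≠ 0) (μ : ℂ) (hμ : μ.im ≠ 0) (c : ℕ → ℂ)
    (hsupp : ∀ n, n < max 2 m.natAbs → c n = 0)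
    (hsum : Summable fun n => ‖c n‖ ^ 2)
    (heq : ∀ n, max 1 m.natAbs ≤ n →
      μ * c n = (((1 - 6 / lam (n + 1)) * aCoef (n + 1) m : ℝ) : ℂ) * c (n + 1)
        + (((1 - 6 / lam (n - 1)) * aCoef n m : ℝ) : ℂ) * c (n - 1)) :
    ((m.natAbs = 1 ∨ m.natAbs = 2) → ∀ n, n ≠ 2 → c n = 0) ∧
    (3 ≤ m.natAbs → ∀ n, c n = 0) :=
  stmt_11_general m μ hμ c hsupp hsum heq
end

section
/- Let m ∈ ℤ∖{0} and μ ∈ ℝ with |μ| ≥ 1, and suppose u = Σ_{n ≥ max(2,|m|)} c_n Y_n^m ∈ L²(S²) satisfies μ u = cos θ · (I + 6Δ^{−1}) u. Then u = 0. -/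
open Real

/-! The recurrence coefficients have absolute value at most `1/2`, so with `|μ| ≥ 1` the
triangle inequality turns the recurrence into `2 ‖c n‖ ≤ ‖c (n-1)‖ + ‖c (n+1)‖`: the sequence
`‖c n‖` is convex. It vanishes just below the support, so convexity makes it nondecreasing from
there on; square-summability makes it tend to `0`, hence it vanishes identically. -/

open Filter Topology

lemma abs_one_sub_six_div_lam_le_one {k : ℕ} (hk : 2 ≤ k) : |1 - 6 / lam k| ≤ 1 := by
  have hk' : (2 : ℝ) ≤ k := by exact_mod_cast hk
  have h6 : 6 ≤ lam k := by unfold lam; nlinarith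
  have hdiv : 6 / lam k ≤ 1 := (div_le_one (by linarith)).mpr h6
  have hdiv' : 0 ≤ 6 / lam k := div_nonneg (by norm_num) (by linarith)
  rw [abs_le]
  constructor <;> linarith

lemma aCoef_nonneg (n : ℕ) (m : ℤ) : 0 ≤ aCoef n m := Real.sqrt_nonneg _

lemma aCoef_le_half {k : ℕ} {m : ℤ} (hm : m ≠ 0) (hk : 1 ≤ k) : aCoef k m ≤ 1 / 2 := by
  have hk' : (1 : ℝ) ≤ k := by exact_mod_cast hk
  have hm2 : (1 : ℝ) ≤ (m : ℝ) ^ 2 := by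
    have : (1 : ℤ) ≤ m ^ 2 := by nlinarith [Int.one_le_abs hm, sq_abs m]
    exact_mod_cast this
  rw [aCoef, Real.sqrt_le_left (by norm_num), div_le_iff₀ (by nlinarith)]
  nlinarith

lemma norm_coef_mul_le_half {k n : ℕ} {m : ℤ} (hm : m ≠ 0) (hk : 2 ≤ k) (hn : 1 ≤ n) (z : ℂ) :
    ‖(((1 - 6 / lam k) * aCoef n m : ℝ) : ℂ) * z‖ ≤ ‖z‖ / 2 := by
  have hcoef : |(1 - 6 / lam k) * aCoef n m| ≤ 1 / 2 := by
    rw [abs_mul, abs_of_nonneg (aCoef_nonneg n m)]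
    calc |1 - 6 / lam k| * aCoef n m ≤ 1 * (1 / 2) :=
          mul_le_mul (abs_one_sub_six_div_lam_le_one hk) (aCoef_le_half hm hn)
            (aCoef_nonneg n m) zero_le_one
      _ = 1 / 2 := by norm_num
  rw [norm_mul, Complex.norm_real, Real.norm_eq_abs]
  nlinarith [norm_nonneg z]

/-- The increments `x (n+1) - x n` are nondecreasing from `N` on and start at `x (N+1) ≥ 0`. -/
lemma eq_zero_of_convex_of_tendsto_zero {x : ℕ → ℝ} {N : ℕ} (hN : x N = 0)
    (hnonneg : ∀ n, 0 ≤ x n) (hconv : ∀ n, N < n → 2 * x n ≤ x (n - 1) + x (n + 1))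
    (hlim : Tendsto x atTop (𝓝 0)) {n : ℕ} (hn : N ≤ n) : x n = 0 := by
  have hincr : ∀ k, x (N + 1) - x N ≤ x (k + N + 1) - x (k + N) := by
    intro k
    induction k with
    | zero => simp
    | succ k ih =>
      have h := hconv (k + N + 1) (by omega)
      rw [show k + N + 1 - 1 = k + N by omega] at h
      rw [show k + 1 + N = k + N + 1 by omega]
      linarith
  have hmono : Monotone fun k => x (k + N) :=
    monotone_nat_of_le_succ fun k => by
      have := hincr k
      rw [show k + 1 + N = k + N + 1 by omega]
      linarith [hnonneg (N + 1)]
  obtain ⟨k, rfl⟩ := Nat.exists_eq_add_of_le' hn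
  exact le_antisymm (hmono.ge_of_tendsto ((tendsto_add_atTop_iff_nat N).mpr hlim) k)
    (hnonneg _)

/-- Case 1 (`μ ∈ ℝ`, `|μ| ≥ 1`) in the proof of Theorem `T:NoEi_Pm`, stated in terms
of the coefficients of the expansion `u = Σ_{n ≥ max(2,|m|)} c_n Y_n^m ∈ P_m L²₀(S²)`.
Since `cos θ · Y_n^m = a_n^m Y_{n−1}^m + a_{n+1}^m Y_{n+1}^m` and
`(I + 6Δ^{−1})Y_n^m = (1 − 6/λ_n)Y_n^m`, the equation `μ u = cos θ · (I + 6Δ^{−1})u`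
is equivalent to the stated coefficient recurrence.  Conclusion: `u = 0`. -/
theorem stmt_12 (m : ℤ) (hm : m ≠ 0) (μ : ℝ) (hμ : 1 ≤ |μ|) (c : ℕ → ℂ)
    (hsupp : ∀ n, n < max 2 m.natAbs → c n = 0)
    (hsum : Summable fun n => ‖c n‖ ^ 2)
    (heq : ∀ n, max 1 m.natAbs ≤ n →
      (μ : ℂ) * c n = (((1 - 6 / lam (n + 1)) * aCoef (n + 1) m : ℝ) : ℂ) * c (n + 1)
        + (((1 - 6 / lam (n - 1)) * aCoef n m : ℝ) : ℂ) * c (n - 1)) :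
    ∀ n, c n = 0 := by
  set N := max 2 m.natAbs
  have hN2 : 2 ≤ N := le_max_left _ _
  have hNm : m.natAbs ≤ N := le_max_right _ _
  have hconv : ∀ n, N - 1 < n → 2 * ‖c n‖ ≤ ‖c (n - 1)‖ + ‖c (n + 1)‖ := by
    intro n hn
    have hfwd : ‖(((1 - 6 / lam (n + 1)) * aCoef (n + 1) m : ℝ) : ℂ) * c (n + 1)‖
        ≤ ‖c (n + 1)‖ / 2 :=
      norm_coef_mul_le_half hm (by omega) (by omega) _
    have hback : ‖(((1 - 6 / lam (n - 1)) * aCoef n m : ℝ) : ℂ) * c (n - 1)‖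
        ≤ ‖c (n - 1)‖ / 2 := by
      -- `1 - 6 / lam 1 = -2`, but then `c (n - 1) = c 1` lies below the support.
      rcases (show n - 1 < N ∨ 2 ≤ n - 1 by omega) with h | h
      · simp [hsupp _ h]
      · exact norm_coef_mul_le_half hm h (by omega) _
    have hnorm : |μ| * ‖c n‖ ≤ ‖c (n + 1)‖ / 2 + ‖c (n - 1)‖ / 2 := by
      rw [← Real.norm_eq_abs, ← Complex.norm_real, ← norm_mul, heq n (by omega)]
      exact (norm_add_le _ _).trans (add_le_add hfwd hback)
    nlinarith [norm_nonneg (c n)]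
  have hlim : Tendsto (fun n => ‖c n‖) atTop (𝓝 0) := by
    simpa [Real.sqrt_sq (norm_nonneg _)] using hsum.tendsto_atTop_zero.sqrt
  intro n
  rcases lt_or_ge n N with h | h
  · exact hsupp n h
  · exact norm_eq_zero.mp <| eq_zero_of_convex_of_tendsto_zero
      (by simp [hsupp (N - 1) (by omega)])
      (fun _ => norm_nonneg _) hconv hlim (by omega)
end

section
/- The solution of the linearized vorticity equation around the one-jet Kolmogorov type flow, ∂_t ω = ν(Δω + 2ω) − a₁ ∂_φ (I + 2Δ^{−1})ω on L²₀(S²), with initial data ω(0), is given by ω(t) = Σ_{n≥1} Σ_{|m|≤n} e^{−σ_{n,m} t} (ω(0), Y_n^m) Y_n^m where σ_{n,m} = ν(λ_n − 2) + i a₁ m (1 − 2/λ_n); consequently ‖ω(t) − Π₁ω(0)‖_{L²} ≤ e^{−4νt}‖ω(0)‖_{L²} where Π₁ is the orthogonal projection onto span{Y_1^0, Y_1^{±1}}. -/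
open Real

/-- The decay rate `σ_{n,m} = ν(λ_n − 2) + i a₁ m (1 − 2/λ_n)`. -/
noncomputable def sigma1 (ν a₁ : ℝ) (n : ℕ) (m : ℤ) : ℂ :=
  ((ν * (lam n - 2) : ℝ) : ℂ) + Complex.I * (a₁ : ℂ) * (m : ℂ) * ((1 - 2 / lam n : ℝ) : ℂ)

/- Each mode solves the scalar ODE `ω' = -σ ω`, so `ω(t) = e^{-σ t} ω(0)`. The `n = 1` modes are
stationary since `σ_{1,m} = 0`, the `n = 0` modes vanish, and every other mode has
`Re σ_{n,m} = ν(λ_n - 2) ≥ 4ν`, hence decays at least like `e^{-4νt}`; summing the squares of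
these pointwise bounds gives the `ℓ²` estimate. -/

theorem eq_cexp_mul_of_hasDerivAt {f : ℝ → ℂ} {a : ℂ} (hf : ∀ t, HasDerivAt f (a * f t) t)
    (t : ℝ) : f t = Complex.exp (a * t) * f 0 := by
  have hderiv : ∀ s : ℝ, HasDerivAt (fun u : ℝ => Complex.exp (-a * u) * f u) 0 s := by
    intro s
    have hexp : HasDerivAt (fun u : ℝ => Complex.exp (-a * u)) (-a * Complex.exp (-a * s)) s := by
      simpa [mul_comm] using (((hasDerivAt_id (s : ℂ)).const_mul (-a)).cexp).comp_ofReal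
    exact (hexp.mul (hf s)).congr_deriv (by ring)
  have hconst : Complex.exp (-a * t) * f t = Complex.exp (-a * 0) * f 0 :=
    is_const_of_deriv_eq_zero (fun s => (hderiv s).differentiableAt) (fun s => (hderiv s).deriv) t 0
  rw [mul_zero, Complex.exp_zero, one_mul] at hconst
  rw [← hconst, ← mul_assoc, ← Complex.exp_add, ← add_mul, add_neg_cancel, zero_mul,
    Complex.exp_zero, one_mul]

theorem sqrt_tsum_sq_le_mul_of_norm_le {ι E F : Type*} [SeminormedAddCommGroup E]
    [SeminormedAddCommGroup F] {f : ι → E} {g : ι → F} {K : ℝ} (hK : 0 ≤ K)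
    (hfg : ∀ i, ‖f i‖ ≤ K * ‖g i‖) (hg : Summable fun i => ‖g i‖ ^ 2) :
    √(∑' i, ‖f i‖ ^ 2) ≤ K * √(∑' i, ‖g i‖ ^ 2) := by
  have hsq : ∀ i, ‖f i‖ ^ 2 ≤ K ^ 2 * ‖g i‖ ^ 2 := fun i => by
    rw [← mul_pow]; exact pow_le_pow_left₀ (norm_nonneg _) (hfg i) 2
  have hKg : Summable fun i => K ^ 2 * ‖g i‖ ^ 2 := hg.mul_left _
  have hf : Summable fun i => ‖f i‖ ^ 2 := hKg.of_nonneg_of_le (fun _ => by positivity) hsq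
  calc √(∑' i, ‖f i‖ ^ 2) ≤ √(∑' i, K ^ 2 * ‖g i‖ ^ 2) := sqrt_le_sqrt (hf.tsum_le_tsum hsq hKg)
    _ = K * √(∑' i, ‖g i‖ ^ 2) := by rw [tsum_mul_left, sqrt_mul (sq_nonneg K), sqrt_sq hK]

theorem sigma1_one (ν a₁ : ℝ) (m : ℤ) : sigma1 ν a₁ 1 m = 0 := by
  norm_num [sigma1, lam]

theorem sigma1_re (ν a₁ : ℝ) (n : ℕ) (m : ℤ) : (sigma1 ν a₁ n m).re = ν * (lam n - 2) := by
  simp [sigma1]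

theorem four_le_lam_sub_two {n : ℕ} (hn : 2 ≤ n) : 4 ≤ lam n - 2 := by
  have : (2 : ℝ) ≤ n := by exact_mod_cast hn
  unfold lam; nlinarith

theorem norm_cexp_neg_sigma1_mul_le {ν : ℝ} (hν : 0 ≤ ν) (a₁ : ℝ) {n : ℕ} (hn : 2 ≤ n) (m : ℤ)
    {t : ℝ} (ht : 0 ≤ t) :
    ‖Complex.exp (-(sigma1 ν a₁ n m) * t)‖ ≤ Real.exp (-(4 * ν) * t) := by
  rw [Complex.norm_exp, Complex.re_mul_ofReal, Complex.neg_re, sigma1_re, exp_le_exp]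
  nlinarith [mul_le_mul_of_nonneg_left (four_le_lam_sub_two hn) (mul_nonneg hν ht)]

theorem norm_cexp_neg_sigma1_mul_sub_proj_le {ν : ℝ} (hν : 0 ≤ ν) (a₁ : ℝ) (n : ℕ) (m : ℤ)
    {t : ℝ} (ht : 0 ≤ t) {z : ℂ} (hz : n = 0 → z = 0) :
    ‖Complex.exp (-(sigma1 ν a₁ n m) * t) * z - (if n = 1 then z else 0)‖
      ≤ Real.exp (-(4 * ν) * t) * ‖z‖ := by
  rcases Nat.lt_or_ge n 2 with hn | hn
  · interval_cases n
    · simp [hz rfl]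
    · simp only [sigma1_one, neg_zero, zero_mul, Complex.exp_zero, one_mul, if_pos, sub_self,
        norm_zero]
      positivity
  · rw [if_neg (by omega), sub_zero, norm_mul]
    exact mul_le_mul_of_nonneg_right (norm_cexp_neg_sigma1_mul_le hν a₁ hn m ht) (norm_nonneg z)

/-- Solution formula `E:Li1_Sol` and linear stability for the one-jet Kolmogorov type
flow.  In the expansion `ω(t) = Σ ω_{n,m}(t) Y_n^m`, the linearized equation
`∂_t ω = ν(Δ + 2)ω − a₁ ∂_φ(I + 2Δ^{−1})ω` is equivalent to the mode-wise ODEs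
`ω_{n,m}' = −σ_{n,m} ω_{n,m}` (each `Y_n^m` is an eigenfunction of the generator with
eigenvalue `−σ_{n,m}`): the solution is `ω_{n,m}(t) = e^{−σ_{n,m}t} ω_{n,m}(0)`, and by
Parseval `‖ω(t) − Π₁ω(0)‖_{L²} ≤ e^{−4νt}‖ω(0)‖_{L²}`, where `Π₁` is the orthogonal
projection onto `span{Y_1^0, Y_1^{±1}}` (the modes with `n = 1`). -/
theorem stmt_16 (ν a₁ : ℝ) (hν : 0 < ν) (c : ℕ × ℤ → ℂ)
    (hsupp : ∀ p : ℕ × ℤ, (p.1 = 0 ∨ p.1 < p.2.natAbs) → c p = 0)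
    (hsum : Summable fun p : ℕ × ℤ => ‖c p‖ ^ 2)
    (ω : ℝ → ℕ × ℤ → ℂ) (hω0 : ω 0 = c)
    (hode : ∀ (p : ℕ × ℤ) (t : ℝ),
      HasDerivAt (fun s => ω s p) (-(sigma1 ν a₁ p.1 p.2) * ω t p) t) :
    (∀ (t : ℝ) (p : ℕ × ℤ), ω t p = Complex.exp (-(sigma1 ν a₁ p.1 p.2) * (t : ℂ)) * c p) ∧
    ∀ t : ℝ, 0 ≤ t →
      Real.sqrt (∑' p : ℕ × ℤ, ‖ω t p - (if p.1 = 1 then c p else 0)‖ ^ 2)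
        ≤ Real.exp (-(4 * ν) * t) * Real.sqrt (∑' p : ℕ × ℤ, ‖c p‖ ^ 2) := by
  have hsol : ∀ (t : ℝ) (p : ℕ × ℤ),
      ω t p = Complex.exp (-(sigma1 ν a₁ p.1 p.2) * (t : ℂ)) * c p := fun t p => by
    rw [eq_cexp_mul_of_hasDerivAt (hode p) t, hω0]
  refine ⟨hsol, fun t ht => sqrt_tsum_sq_le_mul_of_norm_le (exp_nonneg _) (fun p => ?_) hsum⟩
  rw [hsol]
  exact norm_cexp_neg_sigma1_mul_sub_proj_le hν.le a₁ p.1 p.2 ht fun h => hsupp p (Or.inl h)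
end
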